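/- arXiv:1602.03578 — 9 statements merged into one kernel-verified Lean document; each statement's English description precedes it below -/
import Mathlib

section
/- Under hypothesis (1.9), for every prime p the polynomial H̄ ∈ F_p[Λ_1,…,Λ_N] is nonzero. Precisely: the vector u ∈ ℕ^N with u_j = p−1 for 1 ≤ j ≤ μ+1 and u_j = 0 for μ+2 ≤ j ≤ N is the unique u ∈ ℕ^N with Σ_{j=1}^N u_j a_j^+ = (p−1)·(1,…,1,μ+1) and u_j = 0 for all j ≥ μ+2, and consequently the coefficient of Λ_1^{p−1}⋯Λ_{μ+1}^{p−1} in H̄ equals ((p−1)!)^{−(μ+1)} ≠ 0 in F_p. -/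
open Finset

/-! Hypothesis (1.9) says that the first `μ + 1` exponent vectors partition the coordinates:
every coordinate `i` equals `1` in exactly one of them and `0` in the others. For `u` supported on
those vectors, the `i`-th equation `Σ_j u_j a_{ij} = p - 1` therefore reads `u_j = p - 1` for the
vector `a_j` covering `i`, and every `a_j` covers some coordinate because its degree `d` is
positive; hence `u₀` is the only such exponent. Its coefficient in `H̄` is `((p - 1)!)^{-(μ+1)}`,
which by Wilson's theorem is `(-1)^{μ+1} ≠ 0`. -/

theorem Finset.eq_zero_of_sum_eq_one {ι : Type*} {s : Finset ι} {f : ι → ℕ}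
    (h : ∑ j ∈ s, f j = 1) {j j' : ι} (hj : j ∈ s) (hj' : j' ∈ s) (hne : j' ≠ j)
    (hfj : f j ≠ 0) : f j' = 0 := by
  classical
  have hsplit := add_sum_erase s f hj
  have := single_le_sum (f := f) (fun _ _ => Nat.zero_le _) (mem_erase.mpr ⟨hne, hj'⟩)
  omega

section
variable {ι κ : Type*} [Fintype ι] {P : ι → Prop} [DecidablePred P] {A : ι → κ → ℕ}

theorem sum_ite_const_mul_eq (hA : ∀ i, ∑ j ∈ univ.filter P, A j i = 1) (c : ℕ) (i : κ) :
    ∑ j, (if P j then c else 0) * A j i = c := by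
  simp_rw [ite_mul, zero_mul, ← sum_filter, ← mul_sum, hA, mul_one]

theorem eq_ite_const_of_sum_mul_eq (hA : ∀ i, ∑ j ∈ univ.filter P, A j i = 1)
    (hrow : ∀ j, P j → ∃ i, A j i ≠ 0) {c : ℕ} {u : ι → ℕ}
    (hu : ∀ i, ∑ j, u j * A j i = c) (hzero : ∀ j, ¬P j → u j = 0) :
    u = fun j => if P j then c else 0 := by
  funext j
  by_cases hj : P j
  · obtain ⟨i, hi⟩ := hrow j hj
    have hjP : j ∈ univ.filter P := mem_filter.mpr ⟨mem_univ j, hj⟩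
    have hAji : A j i = 1 := le_antisymm
      (hA i ▸ single_le_sum (f := (A · i)) (fun _ _ => Nat.zero_le _) hjP)
      (Nat.one_le_iff_ne_zero.mpr hi)
    rw [if_pos hj, ← hu i, sum_eq_single j, hAji, mul_one]
    · intro j' _ hne
      by_cases hj' : P j'
      · rw [Finset.eq_zero_of_sum_eq_one (hA i) hjP (mem_filter.mpr ⟨mem_univ j', hj'⟩) hne hi,
          mul_zero]
      · rw [hzero j' hj', zero_mul]
    · exact fun h => absurd (mem_univ j) h
  · rw [if_neg hj, hzero j hj]

end

theorem MvPolynomial.coeff_sum_ite_monomial {ι R : Type*} [Fintype ι] [DecidableEq ι]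
    [CommSemiring R] {m : ℕ} (Q : (ι → Fin m) → Prop) [DecidablePred Q]
    (c : (ι → Fin m) → R) {v : ι → ℕ} (hv : ∀ j, v j < m) :
    (∑ u, if Q u then C (c u) * monomial (Finsupp.equivFunOnFinite.symm fun j => (u j : ℕ)) 1
      else 0).coeff (Finsupp.equivFunOnFinite.symm v) =
      if Q (fun j => ⟨v j, hv j⟩) then c (fun j => ⟨v j, hv j⟩) else 0 := by
  rw [coeff_sum, sum_eq_single (fun j => ⟨v j, hv j⟩)]
  · split_ifs <;> simp [C_mul_monomial]
  · intro u _ huv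
    split_ifs
    · rw [C_mul_monomial, coeff_monomial, if_neg]
      intro h
      exact huv (by ext j; exact congrFun (Finsupp.equivFunOnFinite.symm.injective h) j)
    · rfl
  · exact fun h => absurd (mem_univ _) h

theorem stmt_1_general (p : ℕ) [Fact p.Prime]
    (d μ n N : ℕ) (hd : 2 ≤ d)
    (hN : μ + 1 ≤ N)
    (A : Fin N → Fin (n + 1) → ℕ)
    (hAdeg : ∀ j, ∑ i, A j i = d)
    (h19 : ∀ i : Fin (n + 1),
      ∑ j ∈ Finset.univ.filter (fun j : Fin N => (j : ℕ) < μ + 1), A j i = 1)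
    (u₀ : Fin N → ℕ) (hu₀ : u₀ = fun j : Fin N => if (j : ℕ) < μ + 1 then p - 1 else 0)
    (Hbar : MvPolynomial (Fin N) (ZMod p))
    (hHbar : Hbar = ∑ u : Fin N → Fin ((p - 1) * (μ + 1) + 1),
      if (∀ i : Fin (n + 1), ∑ j, (u j : ℕ) * A j i = p - 1) ∧
          (∑ j, (u j : ℕ)) = (p - 1) * (μ + 1)
      then MvPolynomial.C ((∏ j, (((u j : ℕ).factorial : ℕ) : ZMod p))⁻¹) *
        MvPolynomial.monomial (Finsupp.equivFunOnFinite.symm fun j => (u j : ℕ)) 1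
      else 0) :
    ((∀ i : Fin (n + 1), ∑ j, u₀ j * A j i = p - 1) ∧
      (∑ j, u₀ j) = (p - 1) * (μ + 1)) ∧
    (∀ u : Fin N → ℕ,
      (∀ i : Fin (n + 1), ∑ j, u j * A j i = p - 1) →
      (∑ j, u j) = (p - 1) * (μ + 1) →
      (∀ j : Fin N, μ + 1 ≤ (j : ℕ) → u j = 0) → u = u₀) ∧
    Hbar.coeff (Finsupp.equivFunOnFinite.symm u₀)
      = ((((p - 1).factorial : ℕ) : ZMod p)⁻¹) ^ (μ + 1) ∧
    Hbar.coeff (Finsupp.equivFunOnFinite.symm u₀) ≠ 0 ∧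
    Hbar ≠ 0 := by
  subst hu₀
  have hcard : #{j : Fin N | (j : ℕ) < μ + 1} = μ + 1 := by
    rw [Fin.card_filter_val_lt]; omega
  have hrow (j : Fin N) : ∃ i, A j i ≠ 0 := by
    by_contra! h
    have : d = 0 := (hAdeg j).symm.trans (sum_eq_zero fun i _ => h i)
    omega
  have hsolves : (∀ i, ∑ j : Fin N, (if (j : ℕ) < μ + 1 then p - 1 else 0) * A j i = p - 1) ∧
      ∑ j : Fin N, (if (j : ℕ) < μ + 1 then p - 1 else 0) = (p - 1) * (μ + 1) :=
    ⟨sum_ite_const_mul_eq h19 _, by rw [← sum_filter, sum_const, hcard, smul_eq_mul, mul_comm]⟩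
  have hbound (j : Fin N) : (if (j : ℕ) < μ + 1 then p - 1 else 0) < (p - 1) * (μ + 1) + 1 := by
    split_ifs <;> nlinarith
  have hcoeff : Hbar.coeff (Finsupp.equivFunOnFinite.symm
        fun j : Fin N => if (j : ℕ) < μ + 1 then p - 1 else 0) =
      ((((p - 1).factorial : ℕ) : ZMod p)⁻¹) ^ (μ + 1) := by
    rw [hHbar, MvPolynomial.coeff_sum_ite_monomial _ _ hbound, if_pos hsolves]
    simp only [apply_ite Nat.factorial, apply_ite (Nat.cast : ℕ → ZMod p), prod_ite, prod_const,
      hcard, Nat.factorial_zero, Nat.cast_one, one_pow, mul_one, inv_pow]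
  have hne : Hbar.coeff (Finsupp.equivFunOnFinite.symm
      fun j : Fin N => if (j : ℕ) < μ + 1 then p - 1 else 0) ≠ 0 := by
    rw [hcoeff, ZMod.wilsons_lemma]
    exact pow_ne_zero _ (inv_ne_zero (neg_ne_zero.mpr one_ne_zero))
  exact ⟨hsolves, fun u hu _ hzero => eq_ite_const_of_sum_mul_eq h19 (fun j _ => hrow j) hu
    (fun j hj => hzero j (not_lt.mp hj)), hcoeff, hne, MvPolynomial.ne_zero_iff.mpr ⟨_, hne⟩⟩

/-- Under hypothesis (1.9), for every prime `p` the polynomial `H̄ ∈ F_p[Λ_1,…,Λ_N]` is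
nonzero.  Precisely: the vector `u₀` with `u₀_j = p−1` for `j ≤ μ+1` and `u₀_j = 0` for
`j ≥ μ+2` is the unique `u ∈ ℕ^N` satisfying `Σ_j u_j a_j⁺ = (p−1)·(1,…,1,μ+1)` and
`u_j = 0` for all `j ≥ μ+2`, and the coefficient of `Λ_1^{p−1}⋯Λ_{μ+1}^{p−1}` in `H̄`
equals `((p−1)!)^{−(μ+1)} ≠ 0` in `F_p`.  Here `H̄` is the sum, over all `u ∈ ℕ^N` with
`Σ_j u_j a_j⁺ = (p−1)·(1,…,1,μ+1)` (all such `u` satisfy `u_j ≤ (p−1)(μ+1)`, so the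
sum may be taken over `u_j ∈ {0,…,(p−1)(μ+1)}`), of `(u_1!⋯u_N!)^{−1} Λ^u`.
(Indices `j` are 0-based: `j < μ+1` corresponds to `1 ≤ j ≤ μ+1`.) -/
theorem stmt_1 (p : ℕ) [Fact p.Prime]
    (d μ n N : ℕ) (hd : 2 ≤ d) (hn : 1 ≤ n) (hdμ : n + 1 = d * (μ + 1))
    (hN : μ + 1 ≤ N)
    (A : Fin N → Fin (n + 1) → ℕ) (hAdist : Function.Injective A)
    (hAdeg : ∀ j, ∑ i, A j i = d)
    (h19 : ∀ i : Fin (n + 1),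
      ∑ j ∈ Finset.univ.filter (fun j : Fin N => (j : ℕ) < μ + 1), A j i = 1)
    (u₀ : Fin N → ℕ) (hu₀ : u₀ = fun j : Fin N => if (j : ℕ) < μ + 1 then p - 1 else 0)
    (Hbar : MvPolynomial (Fin N) (ZMod p))
    (hHbar : Hbar = ∑ u : Fin N → Fin ((p - 1) * (μ + 1) + 1),
      if (∀ i : Fin (n + 1), ∑ j, (u j : ℕ) * A j i = p - 1) ∧
          (∑ j, (u j : ℕ)) = (p - 1) * (μ + 1)
      then MvPolynomial.C ((∏ j, (((u j : ℕ).factorial : ℕ) : ZMod p))⁻¹) *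
        MvPolynomial.monomial (Finsupp.equivFunOnFinite.symm fun j => (u j : ℕ)) 1
      else 0) :
    ((∀ i : Fin (n + 1), ∑ j, u₀ j * A j i = p - 1) ∧
      (∑ j, u₀ j) = (p - 1) * (μ + 1)) ∧
    (∀ u : Fin N → ℕ,
      (∀ i : Fin (n + 1), ∑ j, u j * A j i = p - 1) →
      (∑ j, u j) = (p - 1) * (μ + 1) →
      (∀ j : Fin N, μ + 1 ≤ (j : ℕ) → u j = 0) → u = u₀) ∧
    Hbar.coeff (Finsupp.equivFunOnFinite.symm u₀)
      = ((((p - 1).factorial : ℕ) : ZMod p)⁻¹) ^ (μ + 1) ∧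
    Hbar.coeff (Finsupp.equivFunOnFinite.symm u₀) ≠ 0 ∧
    Hbar ≠ 0 :=
  stmt_1_general p d μ n N hd hN A hAdeg h19 u₀ hu₀ Hbar hHbar
end

section
/- (Lemma 4.10, arithmetic form.) Assume the combinatorial setup with hypothesis (1.9). Let l = (l_1,…,l_N) ∈ ℤ^N satisfy l_j ≤ 0 for 1 ≤ j ≤ μ+1 and l_j ≥ 0 for μ+2 ≤ j ≤ N, and suppose that every coordinate of the vector b + Σ_{j=1}^N l_j a_j^+ ∈ ℤ^{n+2} is negative. Then the integer ∏_{j=μ+2}^N l_j! divides the integer ∏_{j=1}^{μ+1} (−l_j)!. (Equivalently: all coefficients of the A-hypergeometric series F_u(Λ) of equation (4.4) are integers, for every u ∈ M_-.) -/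
/-!
Write `l = l⁺ - l⁻` coordinatewise. Negativity of the coordinates of `b + Σ lⱼ aⱼ⁺` gives, for every
row `i`, `Σ_{k > μ+1} a_{ik} l⁺_k ≤ Σ_{j ≤ μ+1} a_{ij} l⁻_j`, and by (1.9) the right-hand side is a
single term `l⁻_{j(i)}`. Dividing by any `q > 0` and rounding down keeps the inequality, since
`⌊·/q⌋` is superadditive and the right-hand side has one term. Summing over `i` with weight
`Σᵢ a_{ik} = d` yields `Σ_k ⌊l_k/q⌋ ≤ Σ_j ⌊-l_j/q⌋`, and taking `q = pᵉ` in Legendre's formula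
compares the `p`-adic valuations of the two products of factorials.
-/

open Finset
open scoped Nat

variable {ι κ : Type*}

theorem Finset.sum_mul_div_le_sum_mul_div (s : Finset ι) (a x : ι → ℕ) (q : ℕ) :
    ∑ i ∈ s, a i * (x i / q) ≤ (∑ i ∈ s, a i * x i) / q := by
  induction s using Finset.cons_induction with
  | empty => simp
  | cons j s _ ih =>
    rw [sum_cons, sum_cons]
    exact (add_le_add (Nat.mul_div_le_mul_div_assoc _ _ _) ih).trans
      Nat.div_add_div_le_add_div

theorem Finset.exists_sum_mul_eq_of_sum_eq_one {s : Finset ι} {w : ι → ℕ}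
    (hw : ∑ j ∈ s, w j = 1) : ∃ j₀ ∈ s, ∀ f : ι → ℕ, ∑ j ∈ s, w j * f j = f j₀ := by
  classical
  obtain ⟨j₀, hj₀, hne⟩ := exists_ne_zero_of_sum_ne_zero (hw ▸ one_ne_zero)
  have hsplit := add_sum_erase s w hj₀
  have hrest : ∑ j ∈ s.erase j₀, w j = 0 := by omega
  have hone : w j₀ = 1 := by omega
  refine ⟨j₀, hj₀, fun f => ?_⟩
  rw [← add_sum_erase s _ hj₀, hone, one_mul, add_eq_left]
  exact sum_eq_zero fun j hj => by rw [sum_eq_zero_iff.mp hrest j hj, zero_mul]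

theorem Finset.sum_mul_div_eq_of_sum_eq_one {s : Finset ι} {w : ι → ℕ}
    (hw : ∑ j ∈ s, w j = 1) (x : ι → ℕ) (q : ℕ) :
    ∑ j ∈ s, w j * (x j / q) = (∑ j ∈ s, w j * x j) / q := by
  obtain ⟨j₀, -, hj₀⟩ := exists_sum_mul_eq_of_sum_eq_one hw
  rw [hj₀, hj₀]

theorem Finset.sum_sum_mul_eq_of_row_sum [Fintype κ] {R : Type*} [CommSemiring R]
    {A : ι → κ → R} {d : R} (hA : ∀ j, ∑ i, A j i = d) (s : Finset ι) (f : ι → R) :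
    ∑ i, ∑ j ∈ s, A j i * f j = d * ∑ j ∈ s, f j := by
  rw [sum_comm, mul_sum]
  exact sum_congr rfl fun j _ => by rw [← sum_mul, hA, mul_comm]

theorem Finset.sum_mul_toNat_le_sum_mul_toNat_neg [Fintype ι] {l : ι → ℤ} {w : ι → ℕ}
    (h : ∑ j, l j * w j ≤ 0) : ∑ j, w j * (l j).toNat ≤ ∑ j, w j * (-l j).toNat := by
  have hdiff : ∑ j, (w j : ℤ) * (l j).toNat - ∑ j, (w j : ℤ) * (-l j).toNat = ∑ j, l j * w j := by
    rw [← sum_sub_distrib]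
    exact sum_congr rfl fun j _ => by rw [← mul_sub, Int.toNat_sub_toNat_neg, mul_comm]
  exact_mod_cast (by linarith : ∑ j, (w j : ℤ) * (l j).toNat ≤ ∑ j, (w j : ℤ) * (-l j).toNat)

theorem Finset.sum_div_le_sum_div_of_column_le [Fintype κ] {A : ι → κ → ℕ} {d : ℕ} (hd : 0 < d)
    (hA : ∀ j, ∑ i, A j i = d) {P Q : Finset ι} (hP : ∀ i, ∑ j ∈ P, A j i = 1) {f g : ι → ℕ}
    (hcol : ∀ i, ∑ k ∈ Q, A k i * f k ≤ ∑ j ∈ P, A j i * g j) (q : ℕ) :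
    ∑ k ∈ Q, f k / q ≤ ∑ j ∈ P, g j / q := by
  refine Nat.le_of_mul_le_mul_left ?_ hd
  calc d * ∑ k ∈ Q, f k / q = ∑ i, ∑ k ∈ Q, A k i * (f k / q) :=
        (sum_sum_mul_eq_of_row_sum hA Q _).symm
    _ ≤ ∑ i, (∑ k ∈ Q, A k i * f k) / q :=
        sum_le_sum fun i _ => sum_mul_div_le_sum_mul_div Q _ f q
    _ ≤ ∑ i, (∑ j ∈ P, A j i * g j) / q := sum_le_sum fun i _ => Nat.div_le_div_right (hcol i)
    _ = ∑ i, ∑ j ∈ P, A j i * (g j / q) :=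
        sum_congr rfl fun i _ => (sum_mul_div_eq_of_sum_eq_one (hP i) g q).symm
    _ = d * ∑ j ∈ P, g j / q := sum_sum_mul_eq_of_row_sum hA P _

/-- Landau's criterion for divisibility of products of factorials. -/
theorem Nat.prod_factorial_dvd_prod_factorial_of_sum_div_le {s : Finset ι} {t : Finset κ}
    {f : ι → ℕ} {g : κ → ℕ} (h : ∀ q, 0 < q → ∑ i ∈ s, f i / q ≤ ∑ j ∈ t, g j / q) :
    ∏ i ∈ s, (f i)! ∣ ∏ j ∈ t, (g j)! := by
  have hf : ∀ i ∈ s, (f i)! ≠ 0 := fun i _ => Nat.factorial_ne_zero _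
  have hg : ∀ j ∈ t, (g j)! ≠ 0 := fun j _ => Nat.factorial_ne_zero _
  rw [← Nat.factorization_prime_le_iff_dvd (prod_ne_zero_iff.mpr hf) (prod_ne_zero_iff.mpr hg)]
  intro p hp
  rw [Nat.factorization_prod hf, Nat.factorization_prod hg, sum_apply', sum_apply']
  set b := ∑ i ∈ s, f i + ∑ j ∈ t, g j + 1
  have hlog {n : ℕ} (hn : n ≤ ∑ i ∈ s, f i + ∑ j ∈ t, g j) : Nat.log p n < b :=
    (Nat.log_le_self p n).trans_lt (Nat.lt_succ_of_le hn)
  rw [sum_congr rfl fun i hi => Nat.factorization_factorial hp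
      (hlog ((single_le_sum (fun _ _ => Nat.zero_le _) hi).trans (Nat.le_add_right _ _))),
    sum_congr rfl fun j hj => Nat.factorization_factorial hp
      (hlog ((single_le_sum (fun _ _ => Nat.zero_le _) hj).trans (Nat.le_add_left _ _))),
    sum_comm, sum_comm (s := t)]
  exact sum_le_sum fun e _ => h _ (pow_pos hp.pos e)

theorem stmt_3_general (d μ n N : ℕ) (hd : 2 ≤ d)
    (A : Fin N → Fin (n + 1) → ℕ)
    (hAdeg : ∀ j, ∑ i, A j i = d)
    (h19 : ∀ i : Fin (n + 1),
      ∑ j ∈ Finset.univ.filter (fun j : Fin N => (j : ℕ) < μ + 1), A j i = 1)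
    (l : Fin N → ℤ)
    (hlpos : ∀ j : Fin N, μ + 1 ≤ (j : ℕ) → 0 ≤ l j)
    (hcoord : ∀ i : Fin (n + 1), (-1 : ℤ) + ∑ j, l j * (A j i : ℤ) < 0) :
    (∏ j ∈ Finset.univ.filter (fun j : Fin N => μ + 1 ≤ (j : ℕ)), (l j).toNat.factorial) ∣
      (∏ j ∈ Finset.univ.filter (fun j : Fin N => (j : ℕ) < μ + 1), (-(l j)).toNat.factorial) := by
  refine Nat.prod_factorial_dvd_prod_factorial_of_sum_div_le fun q _ =>
    sum_div_le_sum_div_of_column_le (by omega) hAdeg h19 (fun i => ?_) q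
  have hneg_vanish : ∀ j ∉ univ.filter (fun j : Fin N => (j : ℕ) < μ + 1), (-l j).toNat = 0 :=
    fun j hj => Int.toNat_eq_zero.mpr (by linarith [hlpos j (by simpa using hj)])
  calc ∑ k ∈ univ.filter (fun j : Fin N => μ + 1 ≤ (j : ℕ)), A k i * (l k).toNat
      ≤ ∑ k, A k i * (l k).toNat := sum_le_sum_of_subset (subset_univ _)
    _ ≤ ∑ j, A j i * (-l j).toNat :=
        sum_mul_toNat_le_sum_mul_toNat_neg (by have := hcoord i; omega)
    _ = ∑ j ∈ univ.filter (fun j : Fin N => (j : ℕ) < μ + 1), A j i * (-l j).toNat :=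
        (sum_subset (subset_univ _) fun j _ hj => by rw [hneg_vanish j hj, mul_zero]).symm

/-- Lemma 4.10, arithmetic form.  With `a_j⁺ = (a_j,1)` and `b = (−1,…,−1,−μ−1)`, suppose
`l ∈ ℤ^N` has `l_j ≤ 0` for `j ≤ μ+1` and `l_j ≥ 0` for `j ≥ μ+2`, and every coordinate of
`b + Σ_j l_j a_j⁺` is negative (coordinatewise: `−1 + Σ_j l_j a_{ij} < 0` for `0 ≤ i ≤ n` and
`−(μ+1) + Σ_j l_j < 0`).  Then `∏_{j=μ+2}^N l_j!` divides `∏_{j=1}^{μ+1} (−l_j)!`.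
(Indices `j` are 0-based: `j < μ+1` corresponds to `1 ≤ j ≤ μ+1`.) -/
theorem stmt_3 (d μ n N : ℕ) (hd : 2 ≤ d) (hn : 1 ≤ n) (hdμ : n + 1 = d * (μ + 1))
    (hN : μ + 1 ≤ N)
    (A : Fin N → Fin (n + 1) → ℕ) (hAdist : Function.Injective A)
    (hAdeg : ∀ j, ∑ i, A j i = d)
    (h19 : ∀ i : Fin (n + 1),
      ∑ j ∈ Finset.univ.filter (fun j : Fin N => (j : ℕ) < μ + 1), A j i = 1)
    (l : Fin N → ℤ)
    (hlneg : ∀ j : Fin N, (j : ℕ) < μ + 1 → l j ≤ 0)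
    (hlpos : ∀ j : Fin N, μ + 1 ≤ (j : ℕ) → 0 ≤ l j)
    (hcoord : ∀ i : Fin (n + 1), (-1 : ℤ) + ∑ j, l j * (A j i : ℤ) < 0)
    (hlast : -((μ : ℤ) + 1) + ∑ j, l j < 0) :
    (∏ j ∈ Finset.univ.filter (fun j : Fin N => μ + 1 ≤ (j : ℕ)), (l j).toNat.factorial) ∣
      (∏ j ∈ Finset.univ.filter (fun j : Fin N => (j : ℕ) < μ + 1), (-(l j)).toNat.factorial) :=
  stmt_3_general d μ n N hd A hAdeg h19 l hlpos hcoord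
end

section
/- (Lemma 4.13, arithmetic form.) Assume the combinatorial setup with hypothesis (1.9). Let l = (l_1,…,l_N) ∈ ℤ^N satisfy l_j ≤ 0 for 1 ≤ j ≤ μ+1 and l_j ≥ 0 for μ+2 ≤ j ≤ N, and suppose every coordinate of u := b + Σ_{j=1}^N l_j a_j^+ ∈ ℤ^{n+2} is negative. Let k = (k_1,…,k_N) ∈ ℕ^N be such that every coordinate of u + Σ_{j=1}^N k_j a_j^+ is also negative. Then the integer (∏_{j=1}^N k_j!)·(∏_{j=μ+2}^N l_j!) divides the integer ∏_{j=1}^{μ+1} (−l_j)!. (Equivalently: every coefficient of F_u(Λ) is divisible by ∏_{j=1}^N k_j!, hence by the least common multiple K_u of these products.) -/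
open Finset Nat

/-!
Write `l⁺, l⁻` for the positive and negative parts of `l`. Negativity of the first `n + 1`
coordinates of `u + Σ k_j a_j⁺` says `Σ_j (k_j + l_j⁺) a_{ij} ≤ Σ_j l_j⁻ a_{ij}` for every `i`.
As `l⁻` vanishes beyond `μ + 1`, by (1.9) the right-hand side is the single number `l_t⁻` with
`t ≤ μ + 1` and `a_{it} = 1`. Hence the inequality survives flooring by any `q > 0`, and summing
over `i` (each `a_j` has degree `d`) gives `Σ_j ⌊(k_j + l_j⁺)/q⌋ ≤ Σ_{t ≤ μ+1} ⌊l_t⁻/q⌋`.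
For `q = p^r` these are the terms of Legendre's formula, so `∏ (k_j + l_j⁺)!` divides `∏ l_t⁻!`,
and `k_j! l_j⁺!` divides `(k_j + l_j⁺)!`.
-/

namespace Nat

theorem factorization_prod_factorial {ι : Type*} (s : Finset ι) (f : ι → ℕ) {p b : ℕ}
    (hp : p.Prime) (hb : ∀ i ∈ s, log p (f i) < b) :
    (∏ i ∈ s, (f i)!).factorization p = ∑ r ∈ Ico 1 b, ∑ i ∈ s, f i / p ^ r := by
  rw [factorization_prod fun i _ => factorial_ne_zero _, Finset.sum_apply', Finset.sum_comm]
  exact sum_congr rfl fun i hi => factorization_factorial hp (hb i hi)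

theorem prod_factorial_dvd_prod_factorial_of_sum_div_le_s4 {ι κ : Type*} {s : Finset ι}
    {t : Finset κ} {f : ι → ℕ} {g : κ → ℕ}
    (h : ∀ q, 0 < q → ∑ i ∈ s, f i / q ≤ ∑ j ∈ t, g j / q) :
    ∏ i ∈ s, (f i)! ∣ ∏ j ∈ t, (g j)! := by
  rw [← factorization_le_iff_dvd (prod_ne_zero_iff.2 fun i _ => factorial_ne_zero _)
    (prod_ne_zero_iff.2 fun j _ => factorial_ne_zero _)]
  intro p
  by_cases hp : p.Prime
  · have hf : ∀ i ∈ s, log p (f i) < s.sup f + t.sup g + 1 := fun i hi => by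
      have := (log_le_self p (f i)).trans (le_sup (f := f) hi)
      omega
    have hg : ∀ j ∈ t, log p (g j) < s.sup f + t.sup g + 1 := fun j hj => by
      have := (log_le_self p (g j)).trans (le_sup (f := g) hj)
      omega
    rw [factorization_prod_factorial s f hp hf, factorization_prod_factorial t g hp hg]
    exact sum_le_sum fun r _ => h _ (pow_pos hp.pos r)
  · simp [factorization_eq_zero_of_not_prime _ hp]

theorem sum_div_mul_le_div_of_sum_mul_le {ι : Type*} {s : Finset ι} {w a : ι → ℕ} {m : ℕ}
    (q : ℕ) (h : ∑ j ∈ s, w j * a j ≤ m) :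
    ∑ j ∈ s, w j / q * a j ≤ m / q := by
  rcases q.eq_zero_or_pos with rfl | hq
  · simp
  rw [le_div_iff_mul_le hq, sum_mul]
  calc ∑ j ∈ s, w j / q * a j * q ≤ ∑ j ∈ s, w j * a j := sum_le_sum fun j _ => by
        rw [mul_right_comm]; exact Nat.mul_le_mul_right _ (div_mul_le_self _ _)
    _ ≤ m := h

theorem sum_div_mul_eq_div_sum_mul_of_sum_eq_one {ι : Type*} {s : Finset ι} {g : ι → ℕ}
    (hg : ∑ x ∈ s, g x = 1) (f : ι → ℕ) (q : ℕ) :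
    ∑ x ∈ s, f x / q * g x = (∑ x ∈ s, f x * g x) / q := by
  classical
  obtain ⟨t, ht, hgt⟩ := exists_ne_zero_of_sum_ne_zero (hg.trans_ne one_ne_zero)
  rw [← add_sum_erase _ _ ht] at hg
  have hzero : ∀ x ∈ s, x ≠ t → g x = 0 := fun x hx hxt =>
    sum_eq_zero_iff.1 (by omega) x (mem_erase.2 ⟨hxt, hx⟩)
  rw [sum_eq_single_of_mem t ht fun x hx hxt => by rw [hzero x hx hxt, mul_zero],
    sum_eq_single_of_mem t ht fun x hx hxt => by rw [hzero x hx hxt, mul_zero]]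
  have : g t = 1 := by omega
  rw [this, mul_one, mul_one]

theorem prod_factorial_dvd_prod_factorial_of_sum_mul_le {ι κ : Type*} [Fintype ι] [Fintype κ]
    (A : ι → κ → ℕ) {d : ℕ} (hd : 0 < d) (hrow : ∀ j, ∑ i, A j i = d) {B : Finset ι}
    (hB : ∀ i, ∑ t ∈ B, A t i = 1) {w m : ι → ℕ}
    (h : ∀ i, ∑ j, w j * A j i ≤ ∑ t ∈ B, m t * A t i) :
    ∏ j, (w j)! ∣ ∏ t ∈ B, (m t)! := by
  refine prod_factorial_dvd_prod_factorial_of_sum_div_le_s4 fun q _ => ?_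
  have hfloor (i : κ) : ∑ j, w j / q * A j i ≤ ∑ t ∈ B, m t / q * A t i :=
    sum_div_mul_eq_div_sum_mul_of_sum_eq_one (hB i) m q ▸ sum_div_mul_le_div_of_sum_mul_le q (h i)
  have hsum {s : Finset ι} (v : ι → ℕ) : ∑ i, ∑ j ∈ s, v j * A j i = (∑ j ∈ s, v j) * d := by
    rw [sum_comm, sum_mul]
    exact sum_congr rfl fun j _ => by rw [← mul_sum, hrow]
  have htotal := sum_le_sum fun i (_ : i ∈ univ) => hfloor i
  rw [hsum, hsum] at htotal
  exact Nat.le_of_mul_le_mul_right htotal hd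

end Nat

theorem Int.sum_add_toNat_mul_le_sum_toNat_neg_mul {ι : Type*} {s : Finset ι} {l : ι → ℤ}
    {k a : ι → ℕ} (h : ∑ j ∈ s, (l j + k j) * a j ≤ 0) :
    ∑ j ∈ s, (k j + (l j).toNat) * a j ≤ ∑ j ∈ s, (-l j).toNat * a j := by
  have hsplit : ∑ j ∈ s, ((k j + (l j).toNat) * a j : ℤ) - ∑ j ∈ s, ((-l j).toNat * a j : ℤ) =
      ∑ j ∈ s, (l j + k j) * a j := by
    rw [← sum_sub_distrib]
    exact sum_congr rfl fun j _ => by linear_combination (a j : ℤ) * (l j).toNat_sub_toNat_neg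
  have : ∑ j ∈ s, ((k j + (l j).toNat) * a j : ℤ) ≤ ∑ j ∈ s, ((-l j).toNat * a j : ℤ) := by
    linarith
  exact_mod_cast this

theorem stmt_4_general (d μ n N : ℕ) (hd : 2 ≤ d)
    (A : Fin N → Fin (n + 1) → ℕ)
    (hAdeg : ∀ j, ∑ i, A j i = d)
    (h19 : ∀ i : Fin (n + 1),
      ∑ j ∈ Finset.univ.filter (fun j : Fin N => (j : ℕ) < μ + 1), A j i = 1)
    (l : Fin N → ℤ)
    (hlneg : ∀ j : Fin N, (j : ℕ) < μ + 1 → l j ≤ 0)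
    (hlpos : ∀ j : Fin N, μ + 1 ≤ (j : ℕ) → 0 ≤ l j)
    (k : Fin N → ℕ)
    (hkcoord : ∀ i : Fin (n + 1),
      ((-1 : ℤ) + ∑ j, l j * (A j i : ℤ)) + ∑ j, (k j : ℤ) * (A j i : ℤ) < 0) :
    ((∏ j, (k j).factorial) *
        ∏ j ∈ Finset.univ.filter (fun j : Fin N => μ + 1 ≤ (j : ℕ)), (l j).toNat.factorial) ∣
      (∏ j ∈ Finset.univ.filter (fun j : Fin N => (j : ℕ) < μ + 1), (-(l j)).toNat.factorial) := by
  set B := univ.filter fun j : Fin N => (j : ℕ) < μ + 1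
  have hweighted (i : Fin (n + 1)) :
      ∑ j, (k j + (l j).toNat) * A j i ≤ ∑ t ∈ B, (-l t).toNat * A t i := by
    rw [sum_subset (subset_univ B) fun j _ hj => by
      simp only [B, mem_filter, mem_univ, true_and, not_lt] at hj
      rw [Int.toNat_of_nonpos (neg_nonpos.2 (hlpos j hj)), zero_mul]]
    refine Int.sum_add_toNat_mul_le_sum_toNat_neg_mul ?_
    have := hkcoord i
    simp only [add_mul, sum_add_distrib]
    linarith
  refine dvd_trans ?_ (prod_factorial_dvd_prod_factorial_of_sum_mul_le A (by omega) hAdeg h19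
    hweighted)
  have hpos : ∏ j ∈ univ.filter (fun j : Fin N => μ + 1 ≤ (j : ℕ)), (l j).toNat ! =
      ∏ j, (l j).toNat ! := prod_subset (subset_univ _) fun j _ hj => by
    rw [Int.toNat_of_nonpos (hlneg j (by simpa using hj)), factorial_zero]
  rw [hpos, ← prod_mul_distrib]
  exact prod_dvd_prod_of_dvd _ _ fun j _ => factorial_mul_factorial_dvd_factorial_add _ _

/-- Lemma 4.13, arithmetic form.  With the setup of Lemma 4.10, let additionally
`k ∈ ℕ^N` be such that every coordinate of `u + Σ_j k_j a_j⁺` is also negative, where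
`u = b + Σ_j l_j a_j⁺`.  Then `(∏_{j=1}^N k_j!)·(∏_{j=μ+2}^N l_j!)` divides
`∏_{j=1}^{μ+1} (−l_j)!`.  (Indices `j` are 0-based: `j < μ+1` means `1 ≤ j ≤ μ+1`.) -/
theorem stmt_4 (d μ n N : ℕ) (hd : 2 ≤ d) (hn : 1 ≤ n) (hdμ : n + 1 = d * (μ + 1))
    (hN : μ + 1 ≤ N)
    (A : Fin N → Fin (n + 1) → ℕ) (hAdist : Function.Injective A)
    (hAdeg : ∀ j, ∑ i, A j i = d)
    (h19 : ∀ i : Fin (n + 1),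
      ∑ j ∈ Finset.univ.filter (fun j : Fin N => (j : ℕ) < μ + 1), A j i = 1)
    (l : Fin N → ℤ)
    (hlneg : ∀ j : Fin N, (j : ℕ) < μ + 1 → l j ≤ 0)
    (hlpos : ∀ j : Fin N, μ + 1 ≤ (j : ℕ) → 0 ≤ l j)
    (hcoord : ∀ i : Fin (n + 1), (-1 : ℤ) + ∑ j, l j * (A j i : ℤ) < 0)
    (hlast : -((μ : ℤ) + 1) + ∑ j, l j < 0)
    (k : Fin N → ℕ)
    (hkcoord : ∀ i : Fin (n + 1),
      ((-1 : ℤ) + ∑ j, l j * (A j i : ℤ)) + ∑ j, (k j : ℤ) * (A j i : ℤ) < 0)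
    (hklast : (-((μ : ℤ) + 1) + ∑ j, l j) + ∑ j, (k j : ℤ) < 0) :
    ((∏ j, (k j).factorial) *
        ∏ j ∈ Finset.univ.filter (fun j : Fin N => μ + 1 ≤ (j : ℕ)), (l j).toNat.factorial) ∣
      (∏ j ∈ Finset.univ.filter (fun j : Fin N => (j : ℕ) < μ + 1), (-(l j)).toNat.factorial) :=
  stmt_4_general d μ n N hd A hAdeg h19 l hlneg hlpos k hkcoord
end

section
/- (Congruence (3.24).) With γ_0 as in the context, one has |γ_0^{p−1} + p| ≤ p^{−2}; that is, γ_0^{p−1} ≡ −p modulo elements of absolute value at most p^{−2}. -/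
/-!
Since `|γ₀|^(p-1) = |p|`, the `i`-th term of the series has absolute value
`|γ₀|^(p^i - i(p-1))`, and `p^i - i(p-1) ≥ p` for `i ≥ 2`. The ultrametric inequality applied
to the tail therefore gives `|γ₀ + γ₀^p/p| ≤ |γ₀|^p`, and multiplying by `p/γ₀` yields
`|γ₀^(p-1) + p| ≤ |p| |γ₀|^(p-1) = |p|^2`.
-/

lemma add_one_mul_add_one_le_pow (q : ℕ) {n : ℕ} (hn : 2 ≤ n) :
    (n + 1) * q + 1 ≤ (q + 1) ^ n := by
  induction n, hn using Nat.le_induction with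
  | base => nlinarith [Nat.le_self_pow two_ne_zero q]
  | succ n _ ih =>
    calc (n + 1 + 1) * q + 1 = ((n + 1) * q + 1) + q := by ring
      _ ≤ (q + 1) ^ n + q * (q + 1) ^ n := by nlinarith [Nat.one_le_pow n (q + 1) (by omega)]
      _ = (q + 1) ^ (n + 1) := by ring

section NormedField

variable {K : Type*} [NormedField K] {p : ℕ} {γ : K}

lemma norm_pow_pow_div_pow_le (hγ0 : γ ≠ 0) (hγ1 : ‖γ‖ ≤ 1)
    (hγ : ‖γ‖ ^ (p - 1) = ‖(p : K)‖) {i : ℕ} (hi : 2 ≤ i) :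
    ‖γ ^ p ^ i / (p : K) ^ i‖ ≤ ‖γ‖ ^ p := by
  have hp : p ≠ 0 := by rintro rfl; simp at hγ
  have hpos : 0 < ‖γ‖ ^ ((p - 1) * i) := by positivity
  have hexp : p + (p - 1) * i ≤ p ^ i := by
    obtain ⟨q, rfl⟩ := Nat.exists_eq_add_one_of_ne_zero hp
    rw [Nat.add_sub_cancel]
    linarith [add_one_mul_add_one_le_pow q hi]
  rw [norm_div, norm_pow, norm_pow, ← hγ, ← pow_mul, div_le_iff₀ hpos, ← pow_add]
  exact pow_le_pow_of_le_one (norm_nonneg γ) hγ1 hexp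

variable [IsUltrametricDist K]

lemma norm_add_pow_div_le (hγ0 : γ ≠ 0) (hγ1 : ‖γ‖ ≤ 1) (hγ : ‖γ‖ ^ (p - 1) = ‖(p : K)‖)
    (hroot : HasSum (fun i : ℕ => γ ^ p ^ i / (p : K) ^ i) 0) :
    ‖γ + γ ^ p / p‖ ≤ ‖γ‖ ^ p := by
  have htail : HasSum (fun i : ℕ => γ ^ p ^ (i + 2) / (p : K) ^ (i + 2)) (-(γ + γ ^ p / p)) := by
    simpa [Finset.sum_range_succ] using (hasSum_nat_add_iff' 2).mpr hroot
  rw [← norm_neg, ← htail.tsum_eq]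
  exact IsUltrametricDist.norm_tsum_le_of_forall_le_of_nonneg (by positivity)
    fun i => norm_pow_pow_div_pow_le hγ0 hγ1 hγ (by omega)

lemma norm_pow_sub_one_add_le (hγ0 : γ ≠ 0) (hγ1 : ‖γ‖ ≤ 1)
    (hγ : ‖γ‖ ^ (p - 1) = ‖(p : K)‖)
    (hroot : HasSum (fun i : ℕ => γ ^ p ^ i / (p : K) ^ i) 0) :
    ‖γ ^ (p - 1) + p‖ ≤ ‖(p : K)‖ ^ 2 := by
  have hp : 1 ≤ p := Nat.one_le_iff_ne_zero.mpr (by rintro rfl; simp at hγ)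
  have hpK : (p : K) ≠ 0 := by
    rw [← norm_ne_zero_iff, ← hγ]; exact pow_ne_zero _ (norm_ne_zero_iff.mpr hγ0)
  have hfactor : γ ^ (p - 1) + p = (p / γ) * (γ + γ ^ p / p) := by
    rw [← Nat.sub_add_cancel hp, pow_succ, Nat.sub_add_cancel hp]
    field_simp
    ring
  have hγpow : ‖γ‖ ^ p = ‖γ‖ * ‖(p : K)‖ := by
    rw [← hγ, ← pow_succ', Nat.sub_add_cancel hp]
  calc ‖γ ^ (p - 1) + p‖ = ‖(p : K)‖ / ‖γ‖ * ‖γ + γ ^ p / p‖ := by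
        rw [hfactor, norm_mul, norm_div]
    _ ≤ ‖(p : K)‖ / ‖γ‖ * (‖γ‖ * ‖(p : K)‖) := by
        rw [← hγpow]; gcongr; exact norm_add_pow_div_le hγ0 hγ1 hγ hroot
    _ = ‖(p : K)‖ ^ 2 := by field_simp

end NormedField

theorem stmt_5_general (p : ℕ) (hp : p.Prime)
    (K : Type*) [NormedField K]
    (hna : ∀ x y : K, ‖x + y‖ ≤ max ‖x‖ ‖y‖)
    (hpnorm : ‖(p : K)‖ = ((p : ℝ))⁻¹)
    (γ₀ : K) (hγ₀ : ‖γ₀‖ = (p : ℝ) ^ (-(1 : ℝ) / ((p : ℝ) - 1)))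
    (hroot : HasSum (fun i : ℕ => γ₀ ^ p ^ i / (p : K) ^ i) 0) :
    ‖γ₀ ^ (p - 1) + (p : K)‖ ≤ ((p : ℝ) ^ 2)⁻¹ := by
  have : IsUltrametricDist K :=
    IsUltrametricDist.isUltrametricDist_of_forall_norm_add_le_max_norm hna
  have hp1 : (1 : ℝ) < p := by exact_mod_cast hp.one_lt
  have hγ0 : γ₀ ≠ 0 := by
    rw [← norm_ne_zero_iff, hγ₀]; exact (Real.rpow_pos_of_pos (by linarith) _).ne'
  have hγ1 : ‖γ₀‖ ≤ 1 := by
    rw [hγ₀]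
    exact Real.rpow_le_one_of_one_le_of_nonpos hp1.le (div_nonpos_of_nonpos_of_nonneg
      (by norm_num) (by linarith))
  have hγ : ‖γ₀‖ ^ (p - 1) = ‖(p : K)‖ := by
    rw [hγ₀, hpnorm, ← Real.rpow_natCast, Nat.cast_sub hp.one_le, Nat.cast_one,
      ← Real.rpow_mul (by linarith), div_mul_cancel₀ _ (by linarith), Real.rpow_neg_one]
  simpa [hpnorm, inv_pow] using norm_pow_sub_one_add_le hγ0 hγ1 hγ hroot

/-- Congruence (3.24): `γ₀^{p−1} ≡ −p` modulo elements of absolute value at most `p^{−2}`,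
i.e. `|γ₀^{p−1} + p| ≤ p^{−2}`. Here `K` is a complete nonarchimedean valued field of
characteristic zero with `|p| = p⁻¹`, and `γ₀` is a root of `Σ_{i≥0} t^{p^i}/p^i`
with `|γ₀| = p^{−1/(p−1)}`. -/
theorem stmt_5 (p : ℕ) (hp : p.Prime)
    (K : Type*) [NormedField K] [CompleteSpace K] [CharZero K]
    (hna : ∀ x y : K, ‖x + y‖ ≤ max ‖x‖ ‖y‖)
    (hpnorm : ‖(p : K)‖ = ((p : ℝ))⁻¹)
    (γ₀ : K) (hγ₀ : ‖γ₀‖ = (p : ℝ) ^ (-(1 : ℝ) / ((p : ℝ) - 1)))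
    (hroot : HasSum (fun i : ℕ => γ₀ ^ p ^ i / (p : K) ^ i) 0) :
    ‖γ₀ ^ (p - 1) + (p : K)‖ ≤ ((p : ℝ) ^ 2)⁻¹ :=
  stmt_5_general p hp K hna hpnorm γ₀ hγ₀ hroot
end

section
/- (Equation (3.4).) With γ_0 and γ_j as in the context, for every integer j ≥ 0 one has |γ_j| = p^{−(p^{j+1}/(p−1) − (j+1))}. -/
/-!
Since the series vanishes, `γ_j` is minus its tail `Σ_{i>j} γ₀^{p^i}/p^i`. The `i`-th term has
norm `p^{i - p^i/(p-1)}`, and this exponent drops by `p^i - 1 > 0` from `i` to `i + 1` once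
`i ≥ 1`; so in the ultrametric `K` the tail has the norm of its first term, `i = j + 1`.
-/

section Ultrametric

variable {E : Type*} [NormedAddCommGroup E] [IsUltrametricDist E]

theorem IsUltrametricDist.norm_eq_of_hasSum_of_strictAnti {f : ℕ → E} {s : E}
    (hs : HasSum f s) (hf : StrictAnti fun n => ‖f n‖) : ‖s‖ = ‖f 0‖ := by
  have htail : HasSum (fun n => f (n + 1)) (s - f 0) := by
    rw [← hasSum_nat_add_iff' 1] at hs
    simpa using hs
  have htail_le : ‖s - f 0‖ ≤ ‖f 1‖ := by
    rw [← htail.tsum_eq]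
    exact IsUltrametricDist.norm_tsum_le_of_forall_le_of_nonneg (norm_nonneg _)
      fun n => hf.antitone (Nat.le_add_left 1 n)
  have htail_lt : ‖s - f 0‖ < ‖f 0‖ := htail_le.trans_lt (hf Nat.zero_lt_one)
  calc ‖s‖ = ‖f 0 + (s - f 0)‖ := by rw [add_sub_cancel]
    _ = max ‖f 0‖ ‖s - f 0‖ :=
        IsUltrametricDist.norm_add_eq_max_of_norm_ne_norm htail_lt.ne'
    _ = ‖f 0‖ := max_eq_left htail_lt.le

end Ultrametric

theorem strictAnti_sub_pow_div {b : ℝ} (hb : 1 < b) {k : ℕ} (hk : 1 ≤ k) :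
    StrictAnti fun n : ℕ => ((n + k : ℕ) : ℝ) - b ^ (n + k) / (b - 1) := by
  refine strictAnti_nat_of_succ_lt fun n => ?_
  have hpow : 1 < b ^ (n + k) := one_lt_pow₀ hb (by omega)
  have hb1 : 0 < b - 1 := sub_pos.2 hb
  have hstep : b ^ (n + 1 + k) / (b - 1) = b ^ (n + k) / (b - 1) + b ^ (n + k) := by
    rw [show n + 1 + k = n + k + 1 by ring, pow_succ]
    field_simp
    ring
  rw [hstep]
  push_cast
  linarith

theorem norm_pow_pow_div_pow {K : Type*} [NormedField K] {p : ℕ} (hp : 0 < p)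
    (hpnorm : ‖(p : K)‖ = ((p : ℝ))⁻¹) {x : K}
    (hx : ‖x‖ = (p : ℝ) ^ (-(1 : ℝ) / ((p : ℝ) - 1))) (i : ℕ) :
    ‖x ^ p ^ i / (p : K) ^ i‖ = (p : ℝ) ^ ((i : ℝ) - (p : ℝ) ^ i / ((p : ℝ) - 1)) := by
  have hp0 : (0 : ℝ) < p := Nat.cast_pos.2 hp
  rw [norm_div, norm_pow, norm_pow, hx, hpnorm, inv_pow, ← Real.rpow_natCast _ (p ^ i),
    ← Real.rpow_mul hp0.le, ← Real.rpow_natCast _ i, ← Real.rpow_neg hp0.le,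
    ← Real.rpow_sub hp0]
  congr 1
  push_cast [Real.rpow_natCast]
  ring

theorem stmt_6_general (p : ℕ) (hp : p.Prime)
    (K : Type*) [NormedField K]
    (hna : ∀ x y : K, ‖x + y‖ ≤ max ‖x‖ ‖y‖)
    (hpnorm : ‖(p : K)‖ = ((p : ℝ))⁻¹)
    (γ₀ : K) (hγ₀ : ‖γ₀‖ = (p : ℝ) ^ (-(1 : ℝ) / ((p : ℝ) - 1)))
    (hroot : HasSum (fun i : ℕ => γ₀ ^ p ^ i / (p : K) ^ i) 0)
    (γ : ℕ → K) (hγ : ∀ j, γ j = ∑ i ∈ Finset.range (j + 1), γ₀ ^ p ^ i / (p : K) ^ i)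
    (j : ℕ) :
    ‖γ j‖ = (p : ℝ) ^ (-((p : ℝ) ^ (j + 1) / ((p : ℝ) - 1) - ((j : ℝ) + 1))) := by
  have hp1 : (1 : ℝ) < p := by exact_mod_cast hp.one_lt
  have : IsUltrametricDist K :=
    IsUltrametricDist.isUltrametricDist_of_forall_norm_add_le_max_norm hna
  have hterm := norm_pow_pow_div_pow hp.pos hpnorm hγ₀
  have htail : HasSum (fun n => γ₀ ^ p ^ (n + (j + 1)) / (p : K) ^ (n + (j + 1))) (-γ j) := by
    refine (hasSum_nat_add_iff (f := fun i => γ₀ ^ p ^ i / (p : K) ^ i) (j + 1)).2 ?_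
    rwa [← hγ j, neg_add_cancel]
  have hanti : StrictAnti fun n => ‖γ₀ ^ p ^ (n + (j + 1)) / (p : K) ^ (n + (j + 1))‖ := by
    simp only [hterm]
    exact fun m n hmn => Real.rpow_lt_rpow_of_exponent_lt hp1
      (strictAnti_sub_pow_div hp1 (Nat.le_add_left 1 j) hmn)
  rw [← norm_neg, IsUltrametricDist.norm_eq_of_hasSum_of_strictAnti htail hanti, hterm]
  congr 1
  push_cast
  ring

/-- Equation (3.4): `|γ_j| = p^{−(p^{j+1}/(p−1) − (j+1))}` for every `j ≥ 0`,
where `γ_j = Σ_{i=0}^j γ₀^{p^i}/p^i`. -/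
theorem stmt_6 (p : ℕ) (hp : p.Prime)
    (K : Type*) [NormedField K] [CompleteSpace K] [CharZero K]
    (hna : ∀ x y : K, ‖x + y‖ ≤ max ‖x‖ ‖y‖)
    (hpnorm : ‖(p : K)‖ = ((p : ℝ))⁻¹)
    (γ₀ : K) (hγ₀ : ‖γ₀‖ = (p : ℝ) ^ (-(1 : ℝ) / ((p : ℝ) - 1)))
    (hroot : HasSum (fun i : ℕ => γ₀ ^ p ^ i / (p : K) ^ i) 0)
    (γ : ℕ → K) (hγ : ∀ j, γ j = ∑ i ∈ Finset.range (j + 1), γ₀ ^ p ^ i / (p : K) ^ i)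
    (j : ℕ) :
    ‖γ j‖ = (p : ℝ) ^ (-((p : ℝ) ^ (j + 1) / ((p : ℝ) - 1) - ((j : ℝ) + 1))) :=
  stmt_6_general p hp K hna hpnorm γ₀ hγ₀ hroot γ hγ j
end

section
/- (Monotonicity consequence of (3.6).) With γ_0 and γ_j as in the context, if j_1 ≥ j_2 ≥ 0 are integers and k_1, k_2 ∈ ℕ satisfy p^{j_1}·k_1 = p^{j_2}·k_2, then |γ_{j_1}^{k_1}/k_1!| ≤ |γ_{j_2}^{k_2}/k_2!|. -/
/-!
Write `t i = γ₀ ^ p ^ i / p ^ i`. Since `‖γ₀‖ ^ (p - 1) = ‖p‖`, we get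
`‖t (i + 1)‖ = ‖t i‖ * ‖p‖ ^ (p ^ i - 1)`, so the norms of the terms strictly decrease from
`i = 1` on, and by the ultrametric inequality `γ j = -∑_{i > j} t i` has the norm of `t (j + 1)`.
The identity `t (i + 1) * p ^ (i + 1) = (t i * p ^ i) ^ p` then gives
`‖γ (j + 1)‖ * ‖p‖ ≤ ‖γ j‖ ^ p`, which together with Legendre's `‖(p k)!‖ = ‖p‖ ^ k * ‖k!‖`
is the case `j₁ = j₂ + 1`; the general case follows by induction on `j₁ - j₂`.
-/

open Finset

namespace IsUltrametricDist

lemma norm_eq_norm_zero_of_hasSum {E : Type*} [NormedAddCommGroup E] [IsUltrametricDist E]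
    {f : ℕ → E} {s : E} (hf : HasSum f s) {C : ℝ} (hC : ∀ n, ‖f (n + 1)‖ ≤ C)
    (hC0 : C < ‖f 0‖) : ‖s‖ = ‖f 0‖ := by
  have htail : ‖s - f 0‖ ≤ C := by
    have hsum := (hasSum_nat_add_iff' 1).2 hf
    rw [sum_range_one] at hsum
    rw [← hsum.tsum_eq]
    exact norm_tsum_le_of_forall_le_of_nonneg ((norm_nonneg _).trans (hC 0)) hC
  have hlt := htail.trans_lt hC0
  rw [← add_sub_cancel (f 0) s, norm_add_eq_max_of_norm_ne_norm hlt.ne', max_eq_left hlt.le]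

variable {K : Type*} [NormedField K] [IsUltrametricDist K] {p : ℕ}

lemma norm_natCast_eq_one_of_not_dvd (hp : p.Prime) (hpK : ‖(p : K)‖ < 1) {n : ℕ}
    (hn : ¬ p ∣ n) : ‖(n : K)‖ = 1 := by
  refine (norm_natCast_le_one K n).antisymm (not_lt.1 fun hn1 => ?_)
  -- Bézout: `a n + b p = 1` with both summands of norm `< 1`.
  obtain ⟨a, b, hab⟩ := Nat.isCoprime_iff_coprime.2 (hp.coprime_iff_not_dvd.2 hn).symm
  have hsum : ((a : K) * n + b * p) = 1 := by exact_mod_cast congrArg (Int.cast (R := K)) hab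
  have hle := norm_add_le_max ((a : K) * n) (b * p)
  rw [hsum, norm_one, norm_mul, norm_mul] at hle
  have ha := (mul_le_of_le_one_left (norm_nonneg _) (norm_intCast_le_one K a)).trans_lt hn1
  have hb := (mul_le_of_le_one_left (norm_nonneg _) (norm_intCast_le_one K b)).trans_lt hpK
  exact (hle.trans_lt (max_lt ha hb)).false

lemma norm_natCast_eq_pow_padicValNat (hp : p.Prime) (hpK : ‖(p : K)‖ < 1) {n : ℕ}
    (hn : n ≠ 0) : ‖(n : K)‖ = ‖(p : K)‖ ^ padicValNat p n := by
  obtain ⟨e, m, hm, rfl⟩ := Nat.exists_eq_pow_mul_and_not_dvd hn p hp.ne_one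
  have : Fact p.Prime := ⟨hp⟩
  rw [padicValNat.mul (pow_ne_zero _ hp.ne_zero) (by rintro rfl; simp at hm),
    padicValNat.prime_pow, padicValNat.eq_zero_of_not_dvd hm, add_zero, Nat.cast_mul,
    Nat.cast_pow, norm_mul, norm_pow, norm_natCast_eq_one_of_not_dvd hp hpK hm, mul_one]

lemma norm_factorial_mul (hp : p.Prime) (hpK : ‖(p : K)‖ < 1) (k : ℕ) :
    ‖((p * k).factorial : K)‖ = ‖(p : K)‖ ^ k * ‖(k.factorial : K)‖ := by
  have : Fact p.Prime := ⟨hp⟩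
  rw [norm_natCast_eq_pow_padicValNat hp hpK (Nat.factorial_ne_zero _),
    norm_natCast_eq_pow_padicValNat hp hpK (Nat.factorial_ne_zero _),
    padicValNat_factorial_mul, pow_add, mul_comm]

lemma norm_pow_div_factorial_le (hp : p.Prime) (hp0 : (p : K) ≠ 0) (hpK : ‖(p : K)‖ < 1)
    {x y : K} (hxy : ‖y‖ * ‖(p : K)‖ ≤ ‖x‖ ^ p) (k : ℕ) :
    ‖y ^ k / (k.factorial : K)‖ ≤ ‖x ^ (p * k) / ((p * k).factorial : K)‖ := by
  have hq : 0 < ‖(p : K)‖ := norm_pos_iff.2 hp0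
  have hk : 0 < ‖(k.factorial : K)‖ := by
    rw [norm_natCast_eq_pow_padicValNat hp hpK k.factorial_ne_zero]
    exact pow_pos hq _
  rw [norm_div, norm_div, norm_factorial_mul hp hpK, norm_pow, norm_pow, pow_mul,
    div_le_div_iff₀ hk (by positivity), mul_left_comm, ← mul_assoc, ← mul_pow, mul_comm ‖(p : K)‖]
  exact mul_le_mul_of_nonneg_right (pow_le_pow_left₀ (by positivity) hxy k) hk.le

lemma norm_pow_div_factorial_le_of_forall (hp : p.Prime) (hp0 : (p : K) ≠ 0)
    (hpK : ‖(p : K)‖ < 1) {x : ℕ → K} (hx : ∀ j, ‖x (j + 1)‖ * ‖(p : K)‖ ≤ ‖x j‖ ^ p) (d j k : ℕ) :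
    ‖x (j + d) ^ k / (k.factorial : K)‖ ≤ ‖x j ^ (p ^ d * k) / ((p ^ d * k).factorial : K)‖ := by
  induction d generalizing j k with
  | zero => simp
  | succ d ih =>
    calc ‖x (j + (d + 1)) ^ k / (k.factorial : K)‖
        = ‖x (j + 1 + d) ^ k / (k.factorial : K)‖ := by rw [add_right_comm, add_assoc]
      _ ≤ ‖x (j + 1) ^ (p ^ d * k) / ((p ^ d * k).factorial : K)‖ := ih (j + 1) k
      _ ≤ ‖x j ^ (p * (p ^ d * k)) / ((p * (p ^ d * k)).factorial : K)‖ :=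
        norm_pow_div_factorial_le hp hp0 hpK (hx j) _
      _ = ‖x j ^ (p ^ (d + 1) * k) / ((p ^ (d + 1) * k).factorial : K)‖ := by
        rw [← mul_assoc, ← pow_succ']

end IsUltrametricDist

def dworkTerm {K : Type*} [DivisionRing K] (p : ℕ) (γ₀ : K) (i : ℕ) : K :=
  γ₀ ^ p ^ i / (p : K) ^ i

section DworkTerm

variable {K : Type*} [NormedField K] {p : ℕ} {γ₀ : K}

lemma norm_dworkTerm_succ_mul_le (hp0 : (p : K) ≠ 0) (hp1 : ‖(p : K)‖ ≤ 1) (i : ℕ) :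
    ‖dworkTerm p γ₀ (i + 1)‖ * ‖(p : K)‖ ≤ ‖dworkTerm p γ₀ i‖ ^ p := by
  have hq : 0 < ‖(p : K)‖ := norm_pos_iff.2 hp0
  have hpi : i ≤ i * p :=
    Nat.le_mul_of_pos_right i (Nat.pos_of_ne_zero (by rintro rfl; simp at hp0))
  simp only [dworkTerm, norm_div, norm_pow]
  rw [div_pow, ← pow_mul, ← pow_mul, ← pow_succ, pow_succ ‖(p : K)‖, div_mul_eq_mul_div,
    mul_div_mul_right _ _ hq.ne']
  exact div_le_div_of_nonneg_left (by positivity) (by positivity)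
    (pow_le_pow_of_le_one hq.le hp1 hpi)

lemma norm_dworkTerm_succ (hγ₀ : ‖γ₀‖ ^ (p - 1) = ‖(p : K)‖) (hp0 : (p : K) ≠ 0) (i : ℕ) :
    ‖dworkTerm p γ₀ (i + 1)‖ = ‖dworkTerm p γ₀ i‖ * ‖(p : K)‖ ^ (p ^ i - 1) := by
  have hq : 0 < ‖(p : K)‖ := norm_pos_iff.2 hp0
  have hp : 1 ≤ p := Nat.pos_of_ne_zero (by rintro rfl; simp at hp0)
  have hpow : ‖γ₀‖ ^ p ^ (i + 1) = ‖γ₀‖ ^ p ^ i * ‖(p : K)‖ ^ p ^ i := by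
    rw [← hγ₀, ← pow_mul, ← pow_add, ← one_add_mul, Nat.add_sub_cancel' hp, pow_succ']
  have hpi : ‖(p : K)‖ ^ p ^ i = ‖(p : K)‖ ^ (p ^ i - 1) * ‖(p : K)‖ := by
    rw [← pow_succ, Nat.sub_add_cancel (Nat.one_le_pow _ _ hp)]
  simp only [dworkTerm, norm_div, norm_pow]
  rw [hpow, hpi]
  field_simp
  ring

lemma antitone_norm_dworkTerm (hγ₀ : ‖γ₀‖ ^ (p - 1) = ‖(p : K)‖) (hp0 : (p : K) ≠ 0)
    (hp1 : ‖(p : K)‖ ≤ 1) : Antitone fun i => ‖dworkTerm p γ₀ i‖ :=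
  antitone_nat_of_succ_le fun i => by
    rw [norm_dworkTerm_succ hγ₀ hp0]
    exact mul_le_of_le_one_right (norm_nonneg _) (pow_le_one₀ (norm_nonneg _) hp1)

lemma norm_dworkTerm_succ_lt (hγ₀ : ‖γ₀‖ ^ (p - 1) = ‖(p : K)‖) (hp0 : (p : K) ≠ 0)
    (hp1 : ‖(p : K)‖ < 1) (hp : 1 < p) {i : ℕ} (hi : 1 ≤ i) :
    ‖dworkTerm p γ₀ (i + 1)‖ < ‖dworkTerm p γ₀ i‖ := by
  have hγ₀0 : γ₀ ≠ 0 := by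
    rintro rfl
    rw [norm_zero, zero_pow (Nat.sub_ne_zero_of_lt hp)] at hγ₀
    exact hp0 (norm_eq_zero.1 hγ₀.symm)
  have hterm : 0 < ‖dworkTerm p γ₀ i‖ :=
    norm_pos_iff.2 (div_ne_zero (pow_ne_zero _ hγ₀0) (pow_ne_zero _ hp0))
  rw [norm_dworkTerm_succ hγ₀ hp0]
  refine mul_lt_of_lt_one_right hterm (pow_lt_one₀ (norm_nonneg _) hp1 ?_)
  exact Nat.sub_ne_zero_of_lt (Nat.one_lt_pow (by omega) hp)

lemma norm_sum_range_dworkTerm [IsUltrametricDist K] (hγ₀ : ‖γ₀‖ ^ (p - 1) = ‖(p : K)‖)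
    (hp0 : (p : K) ≠ 0) (hp1 : ‖(p : K)‖ < 1) (hp : 1 < p) (hsum : HasSum (dworkTerm p γ₀) 0)
    (j : ℕ) : ‖∑ i ∈ range (j + 1), dworkTerm p γ₀ i‖ = ‖dworkTerm p γ₀ (j + 1)‖ := by
  have htail := (hasSum_nat_add_iff' (j + 1)).2 hsum
  rw [zero_sub] at htail
  have hlt : ‖dworkTerm p γ₀ (j + 1 + 1)‖ < ‖dworkTerm p γ₀ (0 + (j + 1))‖ := by
    rw [zero_add]; exact norm_dworkTerm_succ_lt hγ₀ hp0 hp1 hp (Nat.le_add_left 1 j)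
  rw [← norm_neg, IsUltrametricDist.norm_eq_norm_zero_of_hasSum htail
    (fun n => antitone_norm_dworkTerm hγ₀ hp0 hp1.le (by omega)) hlt, zero_add]

end DworkTerm

theorem stmt_8_general (p : ℕ) (hp : p.Prime)
    (K : Type*) [NormedField K]
    (hna : ∀ x y : K, ‖x + y‖ ≤ max ‖x‖ ‖y‖)
    (hpnorm : ‖(p : K)‖ = ((p : ℝ))⁻¹)
    (γ₀ : K) (hγ₀ : ‖γ₀‖ = (p : ℝ) ^ (-(1 : ℝ) / ((p : ℝ) - 1)))
    (hroot : HasSum (fun i : ℕ => γ₀ ^ p ^ i / (p : K) ^ i) 0)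
    (γ : ℕ → K) (hγ : ∀ j, γ j = ∑ i ∈ Finset.range (j + 1), γ₀ ^ p ^ i / (p : K) ^ i)
    (j₁ j₂ k₁ k₂ : ℕ) (hj : j₂ ≤ j₁) (hk : p ^ j₁ * k₁ = p ^ j₂ * k₂) :
    ‖γ j₁ ^ k₁ / (k₁.factorial : K)‖ ≤ ‖γ j₂ ^ k₂ / (k₂.factorial : K)‖ := by
  have : IsUltrametricDist K := .isUltrametricDist_of_isNonarchimedean_norm hna
  have hp1 : (1 : ℝ) < p := by exact_mod_cast hp.one_lt
  have hp0 : (p : K) ≠ 0 := norm_ne_zero_iff.1 (by rw [hpnorm]; positivity)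
  have hpK : ‖(p : K)‖ < 1 := by rw [hpnorm]; exact inv_lt_one_of_one_lt₀ hp1
  have hγ₀' : ‖γ₀‖ ^ (p - 1) = ‖(p : K)‖ := by
    rw [hγ₀, hpnorm, ← Real.rpow_natCast, ← Real.rpow_mul (by positivity),
      Nat.cast_sub hp.one_le, Nat.cast_one, div_mul_cancel₀ _ (by linarith), Real.rpow_neg_one]
  have hγnorm (j : ℕ) : ‖γ j‖ = ‖dworkTerm p γ₀ (j + 1)‖ := by
    rw [hγ]; exact norm_sum_range_dworkTerm hγ₀' hp0 hpK hp.one_lt hroot j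
  have hstep (j : ℕ) : ‖γ (j + 1)‖ * ‖(p : K)‖ ≤ ‖γ j‖ ^ p := by
    rw [hγnorm, hγnorm]; exact norm_dworkTerm_succ_mul_le hp0 hpK.le _
  obtain ⟨d, rfl⟩ := Nat.exists_eq_add_of_le hj
  obtain rfl : k₂ = p ^ d * k₁ := by
    rw [pow_add, mul_assoc] at hk
    exact (Nat.eq_of_mul_eq_mul_left (pow_pos hp.pos _) hk).symm
  exact IsUltrametricDist.norm_pow_div_factorial_le_of_forall hp hp0 hpK hstep d j₂ k₁

/-- Monotonicity consequence of (3.6): if `j₁ ≥ j₂` and `p^{j₁}·k₁ = p^{j₂}·k₂`, then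
`|γ_{j₁}^{k₁}/k₁!| ≤ |γ_{j₂}^{k₂}/k₂!|`. -/
theorem stmt_8 (p : ℕ) (hp : p.Prime)
    (K : Type*) [NormedField K] [CompleteSpace K] [CharZero K]
    (hna : ∀ x y : K, ‖x + y‖ ≤ max ‖x‖ ‖y‖)
    (hpnorm : ‖(p : K)‖ = ((p : ℝ))⁻¹)
    (γ₀ : K) (hγ₀ : ‖γ₀‖ = (p : ℝ) ^ (-(1 : ℝ) / ((p : ℝ) - 1)))
    (hroot : HasSum (fun i : ℕ => γ₀ ^ p ^ i / (p : K) ^ i) 0)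
    (γ : ℕ → K) (hγ : ∀ j, γ j = ∑ i ∈ Finset.range (j + 1), γ₀ ^ p ^ i / (p : K) ^ i)
    (j₁ j₂ k₁ k₂ : ℕ) (hj : j₂ ≤ j₁) (hk : p ^ j₁ * k₁ = p ^ j₂ * k₂) :
    ‖γ j₁ ^ k₁ / (k₁.factorial : K)‖ ≤ ‖γ j₂ ^ k₂ / (k₂.factorial : K)‖ :=
  stmt_8_general p hp K hna hpnorm γ₀ hγ₀ hroot γ hγ j₁ j₂ k₁ k₂ hj hk
end

section
/- (Estimate (3.10): coefficients of θ̂₁.) With γ_0 and γ_j as in the context, for all integers J ≥ 1 and i ≥ 0, the i-th coefficient of the formal power series ∏_{j=1}^J exp(γ_j t^{p^j}) ∈ K[[t]], namely b_i = Σ ∏_{j=1}^J γ_j^{k_j}/k_j! where the sum is over all (k_1,…,k_J) ∈ ℕ^J with Σ_{j=1}^J p^j·k_j = i, satisfies |b_i| ≤ p^{−(i(p−1)/p + s_i/(p−1))}. (Equivalently: writing θ̂₁(t) = Σ_i θ̂_{1,i}(γ_0 t)^i/i!, one has ord_p θ̂_{1,i} ≥ i(p−1)/p.) -/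
/-!
Put `w(n) = n(p-1)/p + s_p(n)/(p-1)` (this is `weight p n`), so the bound is `p^{-w(i)}`.
The root condition turns `γ_j` into minus the tail `Σ_{n>j} γ₀^{pⁿ}/pⁿ`, whose terms have norm
`p^{n - pⁿ/(p-1)}`, so `‖γ_j‖ ≤ p^{-w(p^j)}` for `j ≥ 1`. Legendre's formula
`v_p(k!) = (k - s_p(k))/(p-1)` then gives exactly `‖γ_j^k / k!‖ ≤ p^{-w(p^j k)}`: the digit sums
cancel. Finally `w` is subadditive, because `s_p` is (carries only lower the digit sum), so each
monomial of `b_i` has norm at most `p^{-w(i)}`, and the ultrametric inequality bounds their sum.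
-/

open Finset
open scoped Nat

namespace Nat

theorem digit_sum_base_pow_mul {b : ℕ} (hb : 1 < b) (k m : ℕ) :
    (b.digits (b ^ k * m)).sum = (b.digits m).sum := by
  rcases m.eq_zero_or_pos with rfl | hm
  · simp
  · simp [digits_base_pow_mul hb hm]

theorem digit_sum_add_le {p : ℕ} (hp : p.Prime) (a b : ℕ) :
    (p.digits (a + b)).sum ≤ (p.digits a).sum + (p.digits b).sum := by
  have := Fact.mk hp
  have hval : padicValNat p a ! + padicValNat p b ! ≤ padicValNat p (a + b)! := by
    rw [← padicValNat.mul (factorial_ne_zero a) (factorial_ne_zero b),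
      ← padicValNat_dvd_iff_le (factorial_ne_zero _)]
    exact pow_padicValNat_dvd.trans (factorial_mul_factorial_dvd_factorial_add a b)
  have hmul := Nat.mul_le_mul_left (p - 1) hval
  rw [Nat.mul_add, sub_one_mul_padicValNat_factorial, sub_one_mul_padicValNat_factorial,
    sub_one_mul_padicValNat_factorial] at hmul
  have := digit_sum_le p a
  have := digit_sum_le p b
  have := digit_sum_le p (a + b)
  omega

theorem cast_padicValNat_factorial {p : ℕ} (hp : p.Prime) (n : ℕ) :
    (padicValNat p n ! : ℝ) = ((n : ℝ) - (p.digits n).sum) / ((p : ℝ) - 1) := by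
  have := Fact.mk hp
  have hp1 : (1 : ℝ) < p := by exact_mod_cast hp.one_lt
  have h := congrArg (Nat.cast : ℕ → ℝ) (sub_one_mul_padicValNat_factorial (p := p) n)
  rw [Nat.cast_mul, Nat.cast_sub hp.one_lt.le, Nat.cast_sub (digit_sum_le p n), Nat.cast_one] at h
  rw [← h, mul_div_cancel_left₀ _ (by linarith)]

end Nat

noncomputable def weight (p n : ℕ) : ℝ :=
  n * ((p : ℝ) - 1) / p + ((p.digits n).sum : ℝ) / ((p : ℝ) - 1)

section weight

variable {p : ℕ}

theorem weight_add_le (hp : p.Prime) (a b : ℕ) : weight p (a + b) ≤ weight p a + weight p b := by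
  have hp1 : (1 : ℝ) < p := by exact_mod_cast hp.one_lt
  have hs : ((p.digits (a + b)).sum : ℝ) ≤ (p.digits a).sum + (p.digits b).sum := by
    exact_mod_cast Nat.digit_sum_add_le hp a b
  have := div_le_div_of_nonneg_right hs (by linarith : (0 : ℝ) ≤ p - 1)
  simp only [weight, Nat.cast_add, add_div] at this ⊢
  linarith [show ((a : ℝ) + b) * (p - 1) / p = a * (p - 1) / p + b * (p - 1) / p by ring]

theorem weight_sum_le (hp : p.Prime) {ι : Type*} (t : Finset ι) (n : ι → ℕ) :
    weight p (∑ j ∈ t, n j) ≤ ∑ j ∈ t, weight p (n j) :=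
  le_sum_of_subadditive _ (by simp [weight]) (weight_add_le hp) t n

theorem weight_base_pow (hp : p.Prime) (j : ℕ) :
    weight p (p ^ j) = p ^ j * ((p : ℝ) - 1) / p + 1 / ((p : ℝ) - 1) := by
  have h := Nat.digit_sum_base_pow_mul hp.one_lt j 1
  rw [mul_one, Nat.digits_of_lt p 1 one_ne_zero hp.one_lt] at h
  simp [weight, h]

theorem weight_base_pow_mul (hp : p.Prime) (j k : ℕ) :
    weight p (p ^ j * k) = k * weight p (p ^ j) - padicValNat p k ! := by
  have hp1 : (p : ℝ) - 1 ≠ 0 := sub_ne_zero.mpr (by exact_mod_cast hp.one_lt.ne')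
  rw [weight_base_pow hp, Nat.cast_padicValNat_factorial hp, weight,
    Nat.digit_sum_base_pow_mul hp.one_lt]
  push_cast
  field_simp
  ring

theorem natCast_sub_pow_div_le_neg_weight (hp : p.Prime) {m n : ℕ} (hmn : m + 1 < n) :
    (n : ℝ) - (p : ℝ) ^ n / ((p : ℝ) - 1) ≤ -weight p (p ^ (m + 1)) := by
  obtain ⟨d, rfl⟩ := Nat.exists_eq_add_of_lt hmn
  have hp2 : (2 : ℝ) ≤ p := by exact_mod_cast hp.two_le
  have hpm : 1 + m * ((p : ℝ) - 1) ≤ p ^ m := by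
    simpa using one_add_mul_le_pow (by linarith : (-2 : ℝ) ≤ p - 1) m
  have hpd : 1 + d * ((p : ℝ) - 1) ≤ p ^ d := by
    simpa using one_add_mul_le_pow (by linarith : (-2 : ℝ) ≤ p - 1) d
  have hp0 : (0 : ℝ) < p - 1 := by linarith
  have key : ((m + 1 + d + 1 : ℕ) : ℝ) * (p - 1) + 1 + p ^ m * (p - 1) ^ 2
      ≤ p ^ (m + 1 + d + 1) := by
    rw [show m + 1 + d + 1 = m + d + 2 by ring, pow_add, pow_add]
    push_cast
    have hpm1 : (1 : ℝ) ≤ p ^ m * p ^ 2 := one_le_mul_of_one_le_of_one_le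
      (one_le_pow₀ (by linarith)) (one_le_pow₀ (by linarith))
    linarith [mul_le_mul_of_nonneg_left hpd (by linarith : (0 : ℝ) ≤ p ^ m * p ^ 2),
      mul_le_mul_of_nonneg_right hpm (by linarith : (0 : ℝ) ≤ 2 * p - 1),
      mul_nonneg (mul_nonneg (Nat.cast_nonneg (α := ℝ) d) hp0.le) (sub_nonneg.mpr hpm1),
      mul_nonneg (mul_nonneg (Nat.cast_nonneg (α := ℝ) m) hp0.le) hp0.le]
  rw [weight_base_pow hp, ← sub_nonneg]
  have hrw : -(p ^ (m + 1) * ((p : ℝ) - 1) / p + 1 / (p - 1))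
      - ((m + 1 + d + 1 : ℕ) - p ^ (m + 1 + d + 1) / (p - 1))
      = (p ^ (m + 1 + d + 1) - (((m + 1 + d + 1 : ℕ) : ℝ) * (p - 1) + 1
        + p ^ m * (p - 1) ^ 2)) / (p - 1) := by
    field_simp
    ring
  rw [hrw]
  exact div_nonneg (sub_nonneg.mpr key) hp0.le

end weight

section norm

variable {K : Type*} [NormedField K] {p : ℕ}

theorem norm_pow_base_pow_div_base_pow (hp : 0 < p) {γ₀ : K} (hpnorm : ‖(p : K)‖ = (p : ℝ)⁻¹)
    (hγ₀ : ‖γ₀‖ = (p : ℝ) ^ (-(1 : ℝ) / ((p : ℝ) - 1))) (n : ℕ) :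
    ‖γ₀ ^ p ^ n / (p : K) ^ n‖ = (p : ℝ) ^ ((n : ℝ) - (p : ℝ) ^ n / ((p : ℝ) - 1)) := by
  have hp0 : (0 : ℝ) < p := Nat.cast_pos.mpr hp
  rw [norm_div, norm_pow, norm_pow, hγ₀, hpnorm, ← Real.rpow_natCast _ (p ^ n),
    ← Real.rpow_mul hp0.le, inv_pow, div_inv_eq_mul, ← Real.rpow_natCast (p : ℝ) n,
    ← Real.rpow_add hp0, Real.rpow_natCast]
  push_cast
  ring_nf

theorem norm_prod_le_rpow_neg_weight (hp : p.Prime)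
    {ι : Type*} (t : Finset ι) {f : ι → K} {n : ι → ℕ}
    (hf : ∀ j ∈ t, ‖f j‖ ≤ (p : ℝ) ^ (-weight p (n j))) :
    ‖∏ j ∈ t, f j‖ ≤ (p : ℝ) ^ (-weight p (∑ j ∈ t, n j)) := by
  have hp0 : (0 : ℝ) < p := by exact_mod_cast hp.pos
  calc ‖∏ j ∈ t, f j‖ = ∏ j ∈ t, ‖f j‖ := norm_prod t f
    _ ≤ ∏ j ∈ t, (p : ℝ) ^ (-weight p (n j)) := prod_le_prod (fun _ _ => norm_nonneg _) hf
    _ = (p : ℝ) ^ (-∑ j ∈ t, weight p (n j)) := by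
        rw [← sum_neg_distrib, Real.rpow_sum_of_pos hp0]
    _ ≤ (p : ℝ) ^ (-weight p (∑ j ∈ t, n j)) :=
        Real.rpow_le_rpow_of_exponent_le (by exact_mod_cast hp.one_lt.le)
          (neg_le_neg (weight_sum_le hp t n))

variable [IsUltrametricDist K]

theorem norm_natCast_eq_one_of_coprime (hp : ‖(p : K)‖ < 1) {m : ℕ} (hm : p.Coprime m) :
    ‖(m : K)‖ = 1 := by
  obtain ⟨u, v, huv⟩ := Nat.isCoprime_iff_coprime.mpr hm
  have h1 : (u : K) * p + v * m = 1 := by exact_mod_cast congrArg (Int.cast : ℤ → K) huv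
  have hu : ‖(u : K) * p‖ < 1 := by
    rw [norm_mul]
    exact (mul_le_of_le_one_left (norm_nonneg _)
      (IsUltrametricDist.norm_intCast_le_one K u)).trans_lt hp
  have hv : ‖(v : K) * m‖ ≤ ‖(m : K)‖ := by
    rw [norm_mul]
    exact mul_le_of_le_one_left (norm_nonneg _) (IsUltrametricDist.norm_intCast_le_one K v)
  have hmax := IsUltrametricDist.norm_add_le_max ((u : K) * p) ((v : K) * m)
  rw [h1, norm_one] at hmax
  refine le_antisymm (IsUltrametricDist.norm_natCast_le_one K m) ?_
  rcases le_max_iff.mp hmax with h | h <;> linarith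

theorem norm_natCast_eq_norm_pow_padicValNat (hp : p.Prime) (hp1 : ‖(p : K)‖ < 1) {n : ℕ}
    (hn : n ≠ 0) : ‖(n : K)‖ = ‖(p : K)‖ ^ padicValNat p n := by
  have hcast : (n : K) = (p : K) ^ n.factorization p * ((n / p ^ n.factorization p : ℕ) : K) := by
    rw [← Nat.cast_pow, ← Nat.cast_mul, Nat.ordProj_mul_ordCompl_eq_self n p]
  rw [hcast, norm_mul, norm_pow, norm_natCast_eq_one_of_coprime hp1 (Nat.coprime_ordCompl hp hn),
    mul_one, Nat.factorization_def n hp]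

theorem norm_sum_range_le_rpow_neg_weight {γ₀ : K} (hp : p.Prime) (hpnorm : ‖(p : K)‖ = (p : ℝ)⁻¹)
    (hγ₀ : ‖γ₀‖ = (p : ℝ) ^ (-(1 : ℝ) / ((p : ℝ) - 1)))
    (hroot : HasSum (fun i : ℕ => γ₀ ^ p ^ i / (p : K) ^ i) 0) (m : ℕ) :
    ‖∑ i ∈ range (m + 2), γ₀ ^ p ^ i / (p : K) ^ i‖ ≤ (p : ℝ) ^ (-weight p (p ^ (m + 1))) := by
  have htail := (hasSum_nat_add_iff' (m + 2)).mpr hroot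
  rw [← norm_neg, ← zero_sub, ← htail.tsum_eq]
  refine IsUltrametricDist.norm_tsum_le_of_forall_le fun n => ?_
  rw [norm_pow_base_pow_div_base_pow hp.pos hpnorm hγ₀]
  exact Real.rpow_le_rpow_of_exponent_le (by exact_mod_cast hp.one_lt.le)
    (natCast_sub_pow_div_le_neg_weight hp (by omega))

theorem norm_pow_div_factorial_le (hp : p.Prime) (hpnorm : ‖(p : K)‖ = (p : ℝ)⁻¹) {x : K} {j : ℕ}
    (hx : ‖x‖ ≤ (p : ℝ) ^ (-weight p (p ^ j))) (k : ℕ) :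
    ‖x ^ k / (k ! : K)‖ ≤ (p : ℝ) ^ (-weight p (p ^ j * k)) := by
  have hp0 : (0 : ℝ) < p := by exact_mod_cast hp.pos
  have hp1 : ‖(p : K)‖ < 1 := by
    rw [hpnorm]
    exact inv_lt_one_of_one_lt₀ (by exact_mod_cast hp.one_lt)
  calc ‖x ^ k / (k ! : K)‖ = ‖x‖ ^ k * (p : ℝ) ^ padicValNat p k ! := by
        rw [norm_div, norm_pow,
          norm_natCast_eq_norm_pow_padicValNat hp hp1 (Nat.factorial_ne_zero k), hpnorm, inv_pow,
          div_inv_eq_mul]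
    _ ≤ ((p : ℝ) ^ (-weight p (p ^ j))) ^ k * (p : ℝ) ^ padicValNat p k ! := by gcongr
    _ = (p : ℝ) ^ (-weight p (p ^ j * k)) := by
        rw [weight_base_pow_mul hp, ← Real.rpow_natCast _ k, ← Real.rpow_mul hp0.le,
          ← Real.rpow_natCast (p : ℝ), ← Real.rpow_add hp0]
        ring_nf

end norm

theorem stmt_10_general (p : ℕ) (hp : p.Prime)
    (K : Type*) [NormedField K]
    (hna : ∀ x y : K, ‖x + y‖ ≤ max ‖x‖ ‖y‖)
    (hpnorm : ‖(p : K)‖ = ((p : ℝ))⁻¹)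
    (γ₀ : K) (hγ₀ : ‖γ₀‖ = (p : ℝ) ^ (-(1 : ℝ) / ((p : ℝ) - 1)))
    (hroot : HasSum (fun i : ℕ => γ₀ ^ p ^ i / (p : K) ^ i) 0)
    (γ : ℕ → K) (hγ : ∀ j, γ j = ∑ i ∈ Finset.range (j + 1), γ₀ ^ p ^ i / (p : K) ^ i)
    (s : ℕ → ℕ) (hs : ∀ k, s k = (Nat.digits p k).sum)
    (J i : ℕ) (b : K)
    (hb : b = ∑ k : Fin J → Fin (i + 1),
      if ∑ j : Fin J, p ^ ((j : ℕ) + 1) * (k j : ℕ) = i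
      then ∏ j : Fin J, γ ((j : ℕ) + 1) ^ (k j : ℕ) / (((k j : ℕ).factorial : ℕ) : K)
      else 0) :
    ‖b‖ ≤ (p : ℝ) ^ (-((i : ℝ) * ((p : ℝ) - 1) / (p : ℝ) + (s i : ℝ) / ((p : ℝ) - 1))) := by
  have : IsUltrametricDist K := .isUltrametricDist_of_forall_norm_add_le_max_norm hna
  have hγ_le (j : ℕ) : ‖γ (j + 1)‖ ≤ (p : ℝ) ^ (-weight p (p ^ (j + 1))) := by
    rw [hγ]
    exact norm_sum_range_le_rpow_neg_weight hp hpnorm hγ₀ hroot j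
  rw [hb, hs, ← weight]
  refine IsUltrametricDist.norm_sum_le_of_forall_le_of_nonneg (by positivity) fun k _ => ?_
  split_ifs with hk
  · have h := norm_prod_le_rpow_neg_weight hp univ fun (j : Fin J) _ =>
      norm_pow_div_factorial_le hp hpnorm (hγ_le (j : ℕ)) (k j : ℕ)
    rwa [hk] at h
  · rw [norm_zero]
    positivity

/-- Estimate (3.10): the `i`-th coefficient `b_i` of `∏_{j=1}^J exp(γ_j t^{p^j})`,
namely `b_i = Σ ∏_{j=1}^J γ_j^{k_j}/k_j!` over all `(k_1,…,k_J) ∈ ℕ^J` with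
`Σ_j p^j k_j = i` (each such `k_j` satisfies `k_j ≤ i`, so the sum may be taken over
`k_j ∈ {0,…,i}`), satisfies `|b_i| ≤ p^{−(i(p−1)/p + s_i/(p−1))}`. -/
theorem stmt_10 (p : ℕ) (hp : p.Prime)
    (K : Type*) [NormedField K] [CompleteSpace K] [CharZero K]
    (hna : ∀ x y : K, ‖x + y‖ ≤ max ‖x‖ ‖y‖)
    (hpnorm : ‖(p : K)‖ = ((p : ℝ))⁻¹)
    (γ₀ : K) (hγ₀ : ‖γ₀‖ = (p : ℝ) ^ (-(1 : ℝ) / ((p : ℝ) - 1)))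
    (hroot : HasSum (fun i : ℕ => γ₀ ^ p ^ i / (p : K) ^ i) 0)
    (γ : ℕ → K) (hγ : ∀ j, γ j = ∑ i ∈ Finset.range (j + 1), γ₀ ^ p ^ i / (p : K) ^ i)
    (s : ℕ → ℕ) (hs : ∀ k, s k = (Nat.digits p k).sum)
    (J i : ℕ) (hJ : 1 ≤ J) (b : K)
    (hb : b = ∑ k : Fin J → Fin (i + 1),
      if ∑ j : Fin J, p ^ ((j : ℕ) + 1) * (k j : ℕ) = i
      then ∏ j : Fin J, γ ((j : ℕ) + 1) ^ (k j : ℕ) / (((k j : ℕ).factorial : ℕ) : K)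
      else 0) :
    ‖b‖ ≤ (p : ℝ) ^ (-((i : ℝ) * ((p : ℝ) - 1) / (p : ℝ) + (s i : ℝ) / ((p : ℝ) - 1))) :=
  stmt_10_general p hp K hna hpnorm γ₀ hγ₀ hroot γ hγ s hs J i b hb
end

section
/- (Chain construction (7.22)–(7.25) from the proof of Proposition 7.16.) Let p be a prime and a ≥ 1 an integer. Let w ∈ U and let u^{(0)},…,u^{(a−1)} ∈ ℕ^{n+2} each satisfy Σ_{i=0}^n u^{(k)}_i = d·u^{(k)}_{n+1}, with Σ_{k=0}^{a−1} p^k·u^{(k)} = (p^a − 1)·w. Then there exist w^{(0)}, w^{(1)}, …, w^{(a)} ∈ U such that w^{(0)} = w^{(a)} = w and u^{(k)} = p·w^{(k+1)} − w^{(k)} for every 0 ≤ k ≤ a−1; consequently Σ_{k=0}^{a−1} u^{(k)} = (p−1)·Σ_{k=0}^{a−1} w^{(k)}. -/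
/-!
Writing `X_m = w + Σ_{k<m} p^k u^{(k)}`, the relation `Σ_k p^k u^{(k)} = (p^a - 1) w` makes
`X_m = p^a w - Σ_{k≥m} p^k u^{(k)}` divisible by `p^m`, and `w^{(m)} = X_m / p^m` is the chain.
It satisfies `p w^{(m+1)} - w^{(m)} = u^{(m)}`; positivity then propagates from `w^{(0)} = w`
because the `u^{(m)}` are nonnegative, and the linear condition `Σ_{i≤n} v_i = d v_{n+1}` holds
for `w^{(m)}` since it holds for `w` and every `u^{(k)}`.
-/

open Finset

section DigitChain

variable {R M : Type*} [Ring R] [AddCommGroup M] [Module R M] {a : ℕ}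

/-- When `Σ_k c^k u k = (c^a - 1) w`, this is `(w + Σ_{k<m} c^k u k) / c^m`. -/
def digitChain (c : R) (w : M) (u : Fin a → M) (m : ℕ) : M :=
  c ^ (a - m) • w - ∑ k : Fin a with m ≤ k.val, c ^ (k.val - m) • u k

variable (c : R) (w : M) (u : Fin a → M)

theorem digitChain_zero : digitChain c w u 0 = c ^ a • w - ∑ k : Fin a, c ^ k.val • u k := by
  simp [digitChain]

theorem digitChain_self : digitChain c w u a = w := by
  have (k : Fin a) : ¬ a ≤ k.val := k.is_lt.not_ge
  simp [digitChain, this]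

theorem smul_digitChain_succ_sub (k : Fin a) :
    c • digitChain c w u (k + 1) - digitChain c w u k = u k := by
  have hsplit : univ.filter (fun j : Fin a => k.val ≤ j.val) =
      insert k (univ.filter fun j : Fin a => k.val + 1 ≤ j.val) := by
    ext j
    simp only [mem_filter, mem_univ, true_and, mem_insert, Fin.ext_iff]
    omega
  have hpow : c ^ (a - k) = c * c ^ (a - (k + 1)) := by
    rw [← pow_succ']; congr 1; omega
  have hterm : ∀ j ∈ univ.filter (fun j : Fin a => k.val + 1 ≤ j.val),
      c • c ^ (j.val - (k + 1)) • u j = c ^ (j.val - k) • u j := by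
    intro j hj
    rw [mem_filter] at hj
    rw [smul_smul, ← pow_succ']; congr 2; omega
  rw [digitChain, digitChain, hsplit, sum_insert (by simp), smul_sub, smul_sum,
    sum_congr rfl hterm, hpow, mul_smul, Nat.sub_self, pow_zero, one_smul]
  abel

theorem digitChain_mem {S : Submodule R M} (hw : w ∈ S) (hu : ∀ k, u k ∈ S) (m : ℕ) :
    digitChain c w u m ∈ S :=
  sub_mem (S.smul_mem _ hw) (sum_mem fun k _ => S.smul_mem _ (hu k))

end DigitChain

theorem Fin.sum_succ_eq_sum_castSucc {M : Type*} [AddCancelCommMonoid M] {a : ℕ}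
    {V : Fin (a + 1) → M} (h : V 0 = V (Fin.last a)) :
    ∑ k : Fin a, V k.succ = ∑ k : Fin a, V k.castSucc := by
  have h1 := Fin.sum_univ_succ V
  rw [Fin.sum_univ_castSucc, h, add_comm] at h1
  exact (add_left_cancel h1).symm

theorem Fin.sum_mul_succ_sub_castSucc {R : Type*} [Ring R] {a : ℕ} (c : R)
    {V : Fin (a + 1) → R} (h : V 0 = V (Fin.last a)) :
    ∑ k : Fin a, (c * V k.succ - V k.castSucc) = (c - 1) * ∑ k : Fin a, V k.castSucc := by
  rw [sum_sub_distrib, ← mul_sum, Fin.sum_succ_eq_sum_castSucc h, sub_one_mul]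

theorem Fin.one_le_of_castSucc_le_mul_succ {a : ℕ} {c : ℤ} (hc : 0 ≤ c) {V : Fin (a + 1) → ℤ}
    (h0 : 1 ≤ V 0) (hstep : ∀ k : Fin a, V k.castSucc ≤ c * V k.succ) (m : Fin (a + 1)) :
    1 ≤ V m := by
  induction m using Fin.induction with
  | zero => exact h0
  | succ k ih =>
    have := pos_of_mul_pos_right ((hstep k).trans_lt' ih) hc
    omega

def balanceForm (n d : ℕ) : (Fin (n + 2) → ℤ) →ₗ[ℤ] ℤ :=
  ∑ i : Fin (n + 1), LinearMap.proj i.castSucc - (d : ℤ) • LinearMap.proj (Fin.last (n + 1))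

theorem mem_ker_balanceForm {n d : ℕ} {v : Fin (n + 2) → ℤ} :
    v ∈ LinearMap.ker (balanceForm n d) ↔
      ∑ i : Fin (n + 1), v i.castSucc = d * v (Fin.last (n + 1)) := by
  simp [balanceForm, sub_eq_zero]

theorem stmt_15_general (d n : ℕ)
    (p : ℕ) (a : ℕ)
    (w : Fin (n + 2) → ℤ) (hw1 : ∀ i, 1 ≤ w i)
    (hwsum : ∑ i : Fin (n + 1), w i.castSucc = d * w (Fin.last (n + 1)))
    (u : Fin a → Fin (n + 2) → ℕ)
    (husum : ∀ k, ∑ i : Fin (n + 1), u k i.castSucc = d * u k (Fin.last (n + 1)))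
    (hrel : ∀ i : Fin (n + 2), ∑ k : Fin a, (p : ℤ) ^ (k : ℕ) * (u k i : ℤ)
      = ((p : ℤ) ^ a - 1) * w i) :
    ∃ W : Fin (a + 1) → Fin (n + 2) → ℤ,
      (∀ m, (∀ i, 1 ≤ W m i) ∧
        ∑ i : Fin (n + 1), W m i.castSucc = d * W m (Fin.last (n + 1))) ∧
      W 0 = w ∧ W (Fin.last a) = w ∧
      (∀ k : Fin a, ∀ i : Fin (n + 2), (u k i : ℤ) = p * W k.succ i - W k.castSucc i) ∧
      (∀ i : Fin (n + 2), (∑ k : Fin a, (u k i : ℤ))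
        = ((p : ℤ) - 1) * ∑ k : Fin a, W k.castSucc i) := by
  let W (m : Fin (a + 1)) : Fin (n + 2) → ℤ := digitChain (p : ℤ) w (fun k i => (u k i : ℤ)) m
  have hW0 : W 0 = w := by
    funext i
    simp only [W, Fin.val_zero, digitChain_zero, Pi.sub_apply, Pi.smul_apply, smul_eq_mul,
      Finset.sum_apply]
    linarith [hrel i]
  have hWlast : W (Fin.last a) = w := digitChain_self _ _ _
  have hstep (k : Fin a) (i : Fin (n + 2)) : (u k i : ℤ) = p * W k.succ i - W k.castSucc i :=
    (congrFun (smul_digitChain_succ_sub (p : ℤ) w (fun k i => (u k i : ℤ)) k) i).symm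
  have hbal (m : Fin (a + 1)) : W m ∈ LinearMap.ker (balanceForm n d) :=
    digitChain_mem _ _ _ (mem_ker_balanceForm.mpr hwsum)
      (fun k => mem_ker_balanceForm.mpr (by exact_mod_cast husum k)) m
  refine ⟨W, fun m => ⟨fun i => ?_, mem_ker_balanceForm.mp (hbal m)⟩, hW0, hWlast, hstep,
    fun i => ?_⟩
  · refine Fin.one_le_of_castSucc_le_mul_succ (V := fun m => W m i) p.cast_nonneg
      (by simpa only [hW0] using hw1 i) (fun k => ?_) m
    linarith [hstep k i, (u k i).cast_nonneg (α := ℤ)]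
  · rw [← Fin.sum_mul_succ_sub_castSucc (V := fun m => W m i) _
      (congrFun (hW0.trans hWlast.symm) i)]
    exact sum_congr rfl fun k _ => hstep k i

/-- Chain construction (7.22)–(7.25) from the proof of Proposition 7.16.  With
`U = {w ∈ ℤ^{n+2} : w_i ≥ 1 ∀i, Σ_{i=0}^n w_i = d·w_{n+1}}`, given `w ∈ U` and
`u^{(0)},…,u^{(a−1)} ∈ ℕ^{n+2}` with `Σ_{i=0}^n u^{(k)}_i = d·u^{(k)}_{n+1}` and
`Σ_k p^k u^{(k)} = (p^a − 1)·w`, there exist `w^{(0)},…,w^{(a)} ∈ U` with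
`w^{(0)} = w^{(a)} = w` and `u^{(k)} = p·w^{(k+1)} − w^{(k)}` for all `k`; consequently
`Σ_k u^{(k)} = (p−1)·Σ_{k=0}^{a−1} w^{(k)}`. -/
theorem stmt_15 (d μ n : ℕ) (hd : 1 ≤ d) (hdμ : n + 1 = d * (μ + 1))
    (p : ℕ) (hp : p.Prime) (a : ℕ) (ha : 1 ≤ a)
    (w : Fin (n + 2) → ℤ) (hw1 : ∀ i, 1 ≤ w i)
    (hwsum : ∑ i : Fin (n + 1), w i.castSucc = d * w (Fin.last (n + 1)))
    (u : Fin a → Fin (n + 2) → ℕ)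
    (husum : ∀ k, ∑ i : Fin (n + 1), u k i.castSucc = d * u k (Fin.last (n + 1)))
    (hrel : ∀ i : Fin (n + 2), ∑ k : Fin a, (p : ℤ) ^ (k : ℕ) * (u k i : ℤ)
      = ((p : ℤ) ^ a - 1) * w i) :
    ∃ W : Fin (a + 1) → Fin (n + 2) → ℤ,
      (∀ m, (∀ i, 1 ≤ W m i) ∧
        ∑ i : Fin (n + 1), W m i.castSucc = d * W m (Fin.last (n + 1))) ∧
      W 0 = w ∧ W (Fin.last a) = w ∧
      (∀ k : Fin a, ∀ i : Fin (n + 2), (u k i : ℤ) = p * W k.succ i - W k.castSucc i) ∧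
      (∀ i : Fin (n + 2), (∑ k : Fin a, (u k i : ℤ))
        = ((p : ℤ) - 1) * ∑ k : Fin a, W k.castSucc i) :=
  stmt_15_general d n p a w hw1 hwsum u husum hrel
end

section
/- (Inequality (7.28) from the proof of Proposition 7.16.) Let p be a prime and a ≥ 1 an integer. Let w ∈ U and let u^{(0)},…,u^{(a−1)} ∈ ℕ^{n+2} each satisfy Σ_{i=0}^n u^{(k)}_i = d·u^{(k)}_{n+1}, with Σ_{k=0}^{a−1} p^k·u^{(k)} = (p^a − 1)·w. Then Σ_{k=0}^{a−1} u^{(k)}_{n+1} ≥ a(μ+1)(p−1), and equality holds if and only if u^{(k)} = (p−1)·(1,…,1,μ+1) for every k (in which case w = (1,…,1,μ+1)). -/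
/-!
Fix a coordinate `i` and put `m = w_i ≥ 1`. The relation `Σ_k p^k u_k + m = p^a m` can be read
as a base-`p` addition with carries `c_0 = m`, `u_k + c_k = p c_{k+1}`, ending in `c_a = m`.
Summing the carry equations and using `c_a = c_0` gives `Σ_k u_k = (p - 1) Σ_{k=1}^a c_k`; the
carries stay positive, so `Σ_k u_k ≥ a(p - 1)`, with equality only if every carry is `1`, i.e.
`u_k = p - 1` for all `k`.

Summing these bounds over the coordinates `i ≤ n` and using `Σ_{i≤n} u_i = d u_{n+1}` and
`n + 1 = d(μ + 1)` gives the bound for the last coordinate; equality there forces equality in every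
coordinate `i ≤ n`, which determines `u`. Then `w` is read off from the relation, because
`Σ_k p^k (p - 1) = p^a - 1`.
-/

open Finset

def IsCarrySeq (p : ℕ) {a : ℕ} (u : Fin a → ℕ) (c : ℕ → ℕ) : Prop :=
  ∀ k : Fin a, u k + c k = p * c (k + 1)

theorem exists_isCarrySeq {p : ℕ} (hp : 0 < p) :
    ∀ {a : ℕ} (u : Fin a → ℕ) {c₀ m : ℕ}, ∑ k : Fin a, p ^ (k : ℕ) * u k + c₀ = p ^ a * m →
      ∃ c, IsCarrySeq p u c ∧ c 0 = c₀ ∧ c a = m := by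
  intro a
  induction a with
  | zero =>
    intro u c₀ m h
    exact ⟨fun _ => m, fun k => k.elim0, by simpa using h.symm, rfl⟩
  | succ a ih =>
    intro u c₀ m h
    rw [Fin.sum_univ_castSucc] at h
    simp only [Fin.val_castSucc, Fin.val_last] at h
    have hle : u (Fin.last a) ≤ p * m := by
      refine le_of_mul_le_mul_left ?_ (pow_pos hp a)
      rw [← mul_assoc, ← pow_succ]
      omega
    have h' : ∑ k : Fin a, p ^ (k : ℕ) * u k.castSucc + c₀ =
        p ^ a * (p * m - u (Fin.last a)) := by
      rw [Nat.mul_sub, ← mul_assoc, ← pow_succ]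
      omega
    obtain ⟨c, hc, hc0, hca⟩ := ih (fun k => u k.castSucc) h'
    refine ⟨Function.update c (a + 1) m, fun k => ?_, by simpa using hc0, by simp⟩
    induction k using Fin.lastCases with
    | last =>
      simp only [Fin.val_last, ne_eq, Nat.left_eq_add, one_ne_zero, not_false_eq_true,
        Function.update_of_ne, hca, Function.update_self]
      omega
    | cast j =>
      simpa [Function.update_of_ne (by omega : (j : ℕ) ≠ a + 1),
        Function.update_of_ne (by omega : (j : ℕ) + 1 ≠ a + 1)] using hc j

namespace IsCarrySeq

variable {p a : ℕ} {u : Fin a → ℕ} {c : ℕ → ℕ}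

theorem sum_add_sum (hc : IsCarrySeq p u c) :
    ∑ k, u k + ∑ k : Fin a, c k = p * ∑ k : Fin a, c (k + 1) := by
  rw [← sum_add_distrib, mul_sum]
  exact sum_congr rfl fun k _ => hc k

theorem one_le (hc : IsCarrySeq p u c) (h0 : 1 ≤ c 0) : ∀ k ≤ a, 1 ≤ c k
  | 0, _ => h0
  | k + 1, hk => by
    have hrec := hc ⟨k, hk⟩
    have hck := hc.one_le h0 k (by omega)
    refine Nat.pos_of_ne_zero fun hzero => ?_
    rw [Fin.val_mk, hzero, mul_zero] at hrec
    omega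

end IsCarrySeq

theorem sum_fin_apply_add_one_eq_of_apply_eq {M : Type*} [AddCancelCommMonoid M] {a : ℕ}
    {c : ℕ → M} (h : c a = c 0) : ∑ k : Fin a, c (k + 1) = ∑ k : Fin a, c k := by
  rw [Fin.sum_univ_eq_sum_range (fun k => c (k + 1)), Fin.sum_univ_eq_sum_range c]
  have := (sum_range_succ c a).symm.trans (sum_range_succ' c a)
  rw [h] at this
  exact (add_right_cancel this).symm

theorem mul_sub_one_le_sum_of_sum_pow_mul_add_eq {p a m : ℕ} (hp : 2 ≤ p) (hm : 1 ≤ m)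
    {u : Fin a → ℕ} (h : ∑ k : Fin a, p ^ (k : ℕ) * u k + m = p ^ a * m) :
    a * (p - 1) ≤ ∑ k, u k ∧ (∑ k, u k = a * (p - 1) → ∀ k, u k = p - 1) := by
  obtain ⟨c, hc, hc0, hca⟩ := exists_isCarrySeq (by omega) u h
  have hpos : ∀ k : Fin a, 1 ≤ c (k + 1) := fun k => hc.one_le (by omega) _ k.isLt
  have hsum : ∑ k, u k = (p - 1) * ∑ k : Fin a, c (k + 1) := by
    have := hc.sum_add_sum
    rw [sum_fin_apply_add_one_eq_of_apply_eq (hca.trans hc0.symm), Nat.sub_one_mul] at *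
    omega
  have hcard : ∑ _k : Fin a, 1 ≤ ∑ k : Fin a, c (k + 1) := sum_le_sum fun k _ => hpos k
  rw [sum_const, card_univ, Fintype.card_fin, smul_eq_mul, mul_one] at hcard
  refine ⟨hsum ▸ mul_comm a _ ▸ Nat.mul_le_mul_left _ hcard, fun heq => ?_⟩
  have hCa : ∑ k : Fin a, c (k + 1) = ∑ _k : Fin a, 1 := by
    rw [hsum, mul_comm a] at heq
    simpa using Nat.eq_of_mul_eq_mul_left (by omega) heq
  have hc1 : ∀ k : Fin a, c (k + 1) = 1 := fun k =>
    ((sum_eq_sum_iff_of_le fun k _ => hpos k).mp hCa.symm k (mem_univ k)).symm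
  intro k
  have hck : c k = 1 := by
    rcases k with ⟨_ | j, hj⟩
    · obtain ⟨b, rfl⟩ : ∃ b, a = b + 1 := ⟨a - 1, by omega⟩
      exact hc0.trans (hca.symm.trans (hc1 (Fin.last b)))
    · exact hc1 ⟨j, by omega⟩
  have := hc k
  rw [hck, hc1 k] at this
  omega

theorem mul_sub_one_le_sum_of_sum_pow_mul_eq {p a : ℕ} (hp : 2 ≤ p) {w : ℤ} (hw : 1 ≤ w)
    {u : Fin a → ℕ} (h : ∑ k : Fin a, (p : ℤ) ^ (k : ℕ) * (u k : ℤ) = ((p : ℤ) ^ a - 1) * w) :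
    a * (p - 1) ≤ ∑ k, u k ∧ (∑ k, u k = a * (p - 1) → ∀ k, u k = p - 1) := by
  lift w to ℕ using (by omega)
  refine mul_sub_one_le_sum_of_sum_pow_mul_add_eq hp (by exact_mod_cast hw) ?_
  zify
  linear_combination h

theorem eq_of_sum_pow_mul_sub_one_mul_eq {p a : ℕ} (hp : 2 ≤ p) (ha : 1 ≤ a) {e w : ℤ}
    (h : ∑ k : Fin a, (p : ℤ) ^ (k : ℕ) * (((p : ℤ) - 1) * e) = ((p : ℤ) ^ a - 1) * w) :
    w = e := by
  have hgeom : ∑ k : Fin a, (p : ℤ) ^ (k : ℕ) * (((p : ℤ) - 1) * e) =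
      ((p : ℤ) ^ a - 1) * e := by
    rw [Fin.sum_univ_eq_sum_range (fun k => (p : ℤ) ^ k * (((p : ℤ) - 1) * e)),
      ← geom_sum_mul, sum_mul, sum_mul]
    exact sum_congr rfl fun k _ => by ring
  have hpa : (1 : ℤ) < (p : ℤ) ^ a := one_lt_pow₀ (by exact_mod_cast hp) (by omega)
  exact mul_left_cancel₀ (by omega) (h.symm.trans hgeom)

theorem sum_sum_castSucc_eq {a d n : ℕ} {u : Fin a → Fin (n + 2) → ℕ}
    (husum : ∀ k, ∑ i : Fin (n + 1), u k i.castSucc = d * u k (Fin.last (n + 1))) :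
    ∑ i : Fin (n + 1), ∑ k, u k i.castSucc = d * ∑ k, u k (Fin.last (n + 1)) := by
  rw [sum_comm, mul_sum]
  exact sum_congr rfl fun k _ => husum k

theorem sum_fin_const_eq_mul_mul {d μ n b : ℕ} (hdμ : n + 1 = d * (μ + 1)) :
    ∑ _i : Fin (n + 1), b = d * (b * (μ + 1)) := by
  rw [sum_const, card_univ, Fintype.card_fin, smul_eq_mul, hdμ]
  ring

theorem mul_le_sum_last {a d μ n b : ℕ} {u : Fin a → Fin (n + 2) → ℕ}
    (hdμ : n + 1 = d * (μ + 1))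
    (husum : ∀ k, ∑ i : Fin (n + 1), u k i.castSucc = d * u k (Fin.last (n + 1)))
    (hb : ∀ i : Fin (n + 1), b ≤ ∑ k, u k i.castSucc) :
    b * (μ + 1) ≤ ∑ k, u k (Fin.last (n + 1)) := by
  have hd : 0 < d := Nat.pos_of_ne_zero (by rintro rfl; simp at hdμ)
  refine Nat.le_of_mul_le_mul_left ?_ hd
  rw [← sum_fin_const_eq_mul_mul hdμ, ← sum_sum_castSucc_eq husum]
  exact sum_le_sum fun i _ => hb i

theorem sum_castSucc_eq_of_sum_last_eq {a d μ n b : ℕ} {u : Fin a → Fin (n + 2) → ℕ}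
    (hdμ : n + 1 = d * (μ + 1))
    (husum : ∀ k, ∑ i : Fin (n + 1), u k i.castSucc = d * u k (Fin.last (n + 1)))
    (hb : ∀ i : Fin (n + 1), b ≤ ∑ k, u k i.castSucc)
    (heq : ∑ k, u k (Fin.last (n + 1)) = b * (μ + 1)) (i : Fin (n + 1)) :
    ∑ k, u k i.castSucc = b := by
  have hsum : ∑ _i : Fin (n + 1), b = ∑ i : Fin (n + 1), ∑ k, u k i.castSucc := by
    rw [sum_fin_const_eq_mul_mul hdμ, sum_sum_castSucc_eq husum, heq]
  exact ((sum_eq_sum_iff_of_le fun i _ => hb i).mp hsum i (mem_univ i)).symm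

theorem eq_ite_of_castSucc_eq {d μ n c : ℕ} {v : Fin (n + 2) → ℕ} (hdμ : n + 1 = d * (μ + 1))
    (hv : ∑ i : Fin (n + 1), v i.castSucc = d * v (Fin.last (n + 1)))
    (h : ∀ i : Fin (n + 1), v i.castSucc = c) :
    v = fun i : Fin (n + 2) => if (i : ℕ) < n + 1 then c else c * (μ + 1) := by
  have hd : 0 < d := Nat.pos_of_ne_zero (by rintro rfl; simp at hdμ)
  funext i
  induction i using Fin.lastCases with
  | last =>
    rw [sum_congr rfl fun i _ => h i, sum_fin_const_eq_mul_mul hdμ] at hv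
    simpa using (Nat.eq_of_mul_eq_mul_left hd hv).symm
  | cast i => simp [h, not_lt.mpr (Nat.lt_succ_iff.mp i.isLt)]

theorem stmt_16_general (d μ n : ℕ) (hdμ : n + 1 = d * (μ + 1))
    (p : ℕ) (hp : p.Prime) (a : ℕ) (ha : 1 ≤ a)
    (w : Fin (n + 2) → ℤ) (hw1 : ∀ i, 1 ≤ w i)
    (u : Fin a → Fin (n + 2) → ℕ)
    (husum : ∀ k, ∑ i : Fin (n + 1), u k i.castSucc = d * u k (Fin.last (n + 1)))
    (hrel : ∀ i : Fin (n + 2), ∑ k : Fin a, (p : ℤ) ^ (k : ℕ) * (u k i : ℤ)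
      = ((p : ℤ) ^ a - 1) * w i) :
    a * (μ + 1) * (p - 1) ≤ (∑ k : Fin a, u k (Fin.last (n + 1))) ∧
      ((∑ k : Fin a, u k (Fin.last (n + 1))) = a * (μ + 1) * (p - 1) ↔
        ∀ k, u k = fun i : Fin (n + 2) =>
          if (i : ℕ) < n + 1 then p - 1 else (p - 1) * (μ + 1)) ∧
      ((∑ k : Fin a, u k (Fin.last (n + 1))) = a * (μ + 1) * (p - 1) →
        w = fun i : Fin (n + 2) => if (i : ℕ) < n + 1 then 1 else ((μ : ℤ) + 1)) := by
  have hp2 := hp.two_le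
  have hcoord i := mul_sub_one_le_sum_of_sum_pow_mul_eq hp2 (hw1 i) (hrel i)
  have hb i := (hcoord (Fin.castSucc i)).1
  have hiff : (∑ k, u k (Fin.last (n + 1))) = a * (μ + 1) * (p - 1) ↔
      ∀ k, u k = fun i : Fin (n + 2) => if (i : ℕ) < n + 1 then p - 1 else (p - 1) * (μ + 1) := by
    refine ⟨fun heq k => ?_, fun hu => by simp [hu]; ring⟩
    rw [mul_right_comm] at heq
    refine eq_ite_of_castSucc_eq hdμ (husum k) fun i => ?_
    exact (hcoord _).2 (sum_castSucc_eq_of_sum_last_eq hdμ husum hb heq i) k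
  refine ⟨mul_right_comm a (μ + 1) (p - 1) ▸ mul_le_sum_last hdμ husum hb, hiff, fun heq => ?_⟩
  refine funext fun i => eq_of_sum_pow_mul_sub_one_mul_eq hp2 ha ?_
  rw [← hrel i]
  refine sum_congr rfl fun k _ => ?_
  rw [hiff.1 heq k]
  by_cases hi : (i : ℕ) < n + 1 <;> simp only [hi, if_true, if_false] <;>
    push_cast [Nat.cast_sub (by omega : 1 ≤ p)] <;> ring

/-- Inequality (7.28) from the proof of Proposition 7.16.  With the setup of the chain
construction, `Σ_{k=0}^{a−1} u^{(k)}_{n+1} ≥ a(μ+1)(p−1)`, with equality iff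
`u^{(k)} = (p−1)·(1,…,1,μ+1)` for every `k`; and in the case of equality,
`w = (1,…,1,μ+1)`. -/
theorem stmt_16 (d μ n : ℕ) (hd : 1 ≤ d) (hdμ : n + 1 = d * (μ + 1))
    (p : ℕ) (hp : p.Prime) (a : ℕ) (ha : 1 ≤ a)
    (w : Fin (n + 2) → ℤ) (hw1 : ∀ i, 1 ≤ w i)
    (hwsum : ∑ i : Fin (n + 1), w i.castSucc = d * w (Fin.last (n + 1)))
    (u : Fin a → Fin (n + 2) → ℕ)
    (husum : ∀ k, ∑ i : Fin (n + 1), u k i.castSucc = d * u k (Fin.last (n + 1)))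
    (hrel : ∀ i : Fin (n + 2), ∑ k : Fin a, (p : ℤ) ^ (k : ℕ) * (u k i : ℤ)
      = ((p : ℤ) ^ a - 1) * w i) :
    a * (μ + 1) * (p - 1) ≤ (∑ k : Fin a, u k (Fin.last (n + 1))) ∧
      ((∑ k : Fin a, u k (Fin.last (n + 1))) = a * (μ + 1) * (p - 1) ↔
        ∀ k, u k = fun i : Fin (n + 2) =>
          if (i : ℕ) < n + 1 then p - 1 else (p - 1) * (μ + 1)) ∧
      ((∑ k : Fin a, u k (Fin.last (n + 1))) = a * (μ + 1) * (p - 1) →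
        w = fun i : Fin (n + 2) => if (i : ℕ) < n + 1 then 1 else ((μ : ℤ) + 1)) :=
  stmt_16_general d μ n hdμ p hp a ha w hw1 u husum hrel
end
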